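/- arXiv:2005.07938 — 7 statements merged into one kernel-verified Lean document; each statement's English description precedes it below -/
import Mathlib

section
/- Let d ≥ 2 and 0 < δ ≤ 1. The Voronoi cell of the point δ·1 = (δ,…,δ) with respect to the design D(d,δ), namely {x ∈ [−1,1]^d : ‖x − δ·1‖ ≤ ‖x − z‖ for all z ∈ D(d,δ)}, equals the set C_0 ∪ ⋃_{j=1}^d U_j. -/
open MeasureTheory Filter

noncomputable section

/-- The cube `[-1,1]^d` in `ℝ^d`. -/
def cube (d : ℕ) : Set (EuclideanSpace ℝ (Fin d)) := {x | ∀ i, x i ∈ Set.Icc (-1 : ℝ) 1}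

/-- The constant vector `(c,…,c) ∈ ℝ^d`. -/
def const (d : ℕ) (c : ℝ) : EuclideanSpace ℝ (Fin d) := WithLp.toLp 2 (fun _ => c)

/-- The design `D(d,δ)`: the `2^{d-1}` points `δ·ε`, `ε` a sign vector with an even
number of `-1` entries. -/
def design (d : ℕ) (δ : ℝ) : Set (EuclideanSpace ℝ (Fin d)) :=
  {z | ∃ ε : Fin d → ℝ, (∀ i, ε i = 1 ∨ ε i = -1) ∧ Even {i | ε i = -1}.ncard ∧
        z = fun i => δ * ε i}

/-- `C_{d,z,ρ}`: fraction of the cube `[-1,1]^d` covered by the closed ball `B(z,ρ)`. -/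
def coverOne (d : ℕ) (z : EuclideanSpace ℝ (Fin d)) (ρ : ℝ) : ℝ :=
  (volume (cube d ∩ Metric.closedBall z ρ)).toReal / 2 ^ d

/-- `C_d(Z,r)`: fraction of the cube `[-1,1]^d` covered by the union of balls of
radius `r` centred at points of `Z`. -/
def cover (d : ℕ) (Z : Set (EuclideanSpace ℝ (Fin d))) (r : ℝ) : ℝ :=
  (volume (cube d ∩ ⋃ z ∈ Z, Metric.closedBall z r)).toReal / 2 ^ d

/-- Mean squared quantization error `θ(Z)`. -/
def quantErr (d : ℕ) (Z : Set (EuclideanSpace ℝ (Fin d))) : ℝ :=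
  (∫ x in cube d, ⨅ z : Z, ‖x - (z : EuclideanSpace ℝ (Fin d))‖ ^ 2) / 2 ^ d

/-- The cube `C_0 = [0,1]^d`. -/
def C0 (d : ℕ) : Set (EuclideanSpace ℝ (Fin d)) := {x | ∀ i, x i ∈ Set.Icc (0 : ℝ) 1}

/-- The set `U_j`. -/
def U (d : ℕ) (j : Fin d) : Set (EuclideanSpace ℝ (Fin d)) :=
  {x | -1 ≤ x j ∧ x j ≤ 0 ∧ ∀ k, k ≠ j → |x j| ≤ x k ∧ x k ≤ 1}

/-
If `ε` is a sign vector with negative coordinates exactly on `S`, then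
`‖x - δε‖² - ‖x - δ·1‖² = 4δ ∑_{i ∈ S} xᵢ`, so `x` lies in the Voronoi cell of `δ·1` iff
`∑_{i ∈ S} xᵢ ≥ 0` for every `S` of even size. Pairs `S = {i, j}` already force this: the
condition is `xᵢ + xⱼ ≥ 0` for all `i ≠ j`, i.e. at most one coordinate is negative and its
absolute value is dominated by all the others, which inside `[-1,1]^d` is `C₀ ∪ ⋃ⱼ Uⱼ`.
-/

lemma mem_design_iff {d : ℕ} {δ : ℝ} {z : EuclideanSpace ℝ (Fin d)} :
    z ∈ design d δ ↔
      ∃ S : Finset (Fin d), Even S.card ∧ ∀ i, z i = δ * if i ∈ S then -1 else 1 := by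
  constructor
  · rintro ⟨ε, hε, heven, hz⟩
    classical
    refine ⟨Finset.univ.filter (ε · = -1), ?_, fun i => ?_⟩
    · simpa [← Set.ncard_coe_finset] using heven
    · rcases hε i with h | h <;> norm_num [hz, h]
  · rintro ⟨S, heven, hz⟩
    refine ⟨fun i => if i ∈ S then -1 else 1, fun i => ?_, ?_, funext hz⟩
    · by_cases hi : i ∈ S <;> simp [hi]
    · have hset : {i | (if i ∈ S then -1 else 1 : ℝ) = -1} = ↑S := by
        ext i; by_cases hi : i ∈ S <;> norm_num [hi]
      rwa [hset, Set.ncard_coe_finset]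

lemma norm_sub_const_le_iff {d : ℕ} {δ : ℝ} (hδ : 0 < δ) (x z : EuclideanSpace ℝ (Fin d))
    (S : Finset (Fin d)) (hz : ∀ i, z i = δ * if i ∈ S then -1 else 1) :
    ‖x - const d δ‖ ≤ ‖x - z‖ ↔ 0 ≤ ∑ i ∈ S, x i := by
  have hsq : ∑ i, (x - z) i ^ 2 = ∑ i, (x - const d δ) i ^ 2 + 4 * δ * ∑ i ∈ S, x i := by
    rw [Finset.mul_sum, ← Fintype.sum_ite_mem S, ← Finset.sum_add_distrib]
    refine Finset.sum_congr rfl fun i _ => ?_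
    simp only [PiLp.sub_apply, hz i, const]
    split_ifs <;> ring
  rw [← sq_le_sq₀ (norm_nonneg _) (norm_nonneg _), EuclideanSpace.real_norm_sq_eq,
    EuclideanSpace.real_norm_sq_eq, hsq, le_add_iff_nonneg_right,
    mul_nonneg_iff_of_pos_left (by positivity)]

lemma forall_design_norm_sub_const_le_iff {d : ℕ} {δ : ℝ} (hδ : 0 < δ)
    (x : EuclideanSpace ℝ (Fin d)) :
    (∀ z ∈ design d δ, ‖x - const d δ‖ ≤ ‖x - z‖) ↔
      ∀ S : Finset (Fin d), Even S.card → 0 ≤ ∑ i ∈ S, x i := by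
  constructor
  · intro h S hS
    let z : EuclideanSpace ℝ (Fin d) := WithLp.toLp 2 fun i => δ * if i ∈ S then -1 else 1
    exact (norm_sub_const_le_iff hδ x z S fun i => rfl).mp
      (h z (mem_design_iff.mpr ⟨S, hS, fun i => rfl⟩))
  · intro h z hz
    obtain ⟨S, hS, hzS⟩ := mem_design_iff.mp hz
    exact (norm_sub_const_le_iff hδ x z S hzS).mpr (h S hS)

lemma forall_even_card_sum_nonneg_iff {ι : Type*} (x : ι → ℝ) :
    (∀ S : Finset ι, Even S.card → 0 ≤ ∑ i ∈ S, x i) ↔ ∀ i j, i ≠ j → 0 ≤ x i + x j := by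
  classical
  refine ⟨fun h i j hij => by simpa [Finset.sum_pair hij] using h {i, j} (by simp [hij]), ?_⟩
  intro h S heven
  by_cases hneg : ∃ j ∈ S, x j < 0
  · obtain ⟨j, hjS, hj⟩ := hneg
    have hcard : 1 < S.card := by
      obtain ⟨m, hm⟩ := heven
      have := Finset.card_pos.mpr ⟨j, hjS⟩
      omega
    obtain ⟨k, hkS, hkj⟩ := Finset.exists_mem_ne hcard j
    have hpos : ∀ i ∈ S.erase j, 0 ≤ x i := fun i hi => by
      linarith [h i j (Finset.ne_of_mem_erase hi)]
    have hk : x k ≤ ∑ i ∈ S.erase j, x i :=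
      Finset.single_le_sum hpos (Finset.mem_erase.mpr ⟨hkj, hkS⟩)
    rw [← Finset.add_sum_erase S x hjS]
    linarith [h k j hkj]
  · push Not at hneg
    exact Finset.sum_nonneg hneg

lemma cube_pairwise_add_nonneg_eq (d : ℕ) :
    {x : EuclideanSpace ℝ (Fin d) |
        (∀ i, x i ∈ Set.Icc (-1 : ℝ) 1) ∧ ∀ i j, i ≠ j → 0 ≤ x i + x j} =
      C0 d ∪ ⋃ j, U d j := by
  ext x
  simp only [Set.mem_ofPred_eq, Set.mem_union, Set.mem_iUnion, C0, U, Set.mem_Icc]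
  constructor
  · rintro ⟨hcube, hpair⟩
    by_cases hneg : ∃ j, x j < 0
    · obtain ⟨j, hj⟩ := hneg
      refine Or.inr ⟨j, (hcube j).1, hj.le, fun k hk => ⟨?_, (hcube k).2⟩⟩
      rw [abs_of_neg hj]
      linarith [hpair j k (Ne.symm hk)]
    · push Not at hneg
      exact Or.inl fun i => ⟨hneg i, (hcube i).2⟩
  · rintro (hC | ⟨j, hj1, hj0, hU⟩)
    · exact ⟨fun i => ⟨by linarith [(hC i).1], (hC i).2⟩,
        fun i j _ => add_nonneg (hC i).1 (hC j).1⟩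
    · simp only [abs_of_nonpos hj0] at hU
      refine ⟨fun i => ?_, fun i k hik => ?_⟩
      · by_cases hij : i = j
        · subst hij
          exact ⟨hj1, by linarith⟩
        · exact ⟨by linarith [(hU i hij).1], (hU i hij).2⟩
      · by_cases hij : i = j
        · subst hij
          linarith [(hU k (Ne.symm hik)).1]
        by_cases hkj : k = j
        · subst hkj
          linarith [(hU i hij).1]
        linarith [(hU i hij).1, (hU k hkj).1]

theorem stmt1_general (d : ℕ) (δ : ℝ) (hδ0 : 0 < δ) :
    {x : EuclideanSpace ℝ (Fin d) |
        (∀ i, x i ∈ Set.Icc (-1 : ℝ) 1) ∧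
        ∀ z ∈ design d δ, ‖x - const d δ‖ ≤ ‖x - z‖} =
      C0 d ∪ ⋃ j, U d j := by
  rw [← cube_pairwise_add_nonneg_eq]
  ext x
  simp only [Set.mem_ofPred_eq, forall_design_norm_sub_const_le_iff hδ0,
    forall_even_card_sum_nonneg_iff]

theorem stmt1 (d : ℕ) (hd : 2 ≤ d) (δ : ℝ) (hδ0 : 0 < δ) (hδ1 : δ ≤ 1) :
    {x : EuclideanSpace ℝ (Fin d) |
        (∀ i, x i ∈ Set.Icc (-1 : ℝ) 1) ∧
        ∀ z ∈ design d δ, ‖x - const d δ‖ ≤ ‖x - z‖} =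
      C0 d ∪ ⋃ j, U d j :=
  stmt1_general d δ hδ0

end
end

section
/- Let d ≥ 2 and 0 < δ ≤ 1. Then the mean squared quantization error of the design D(d,δ) satisfies θ(D(d,δ)) = d·(δ² − δ + 1/3) + 2δ/(d+1). -/
open MeasureTheory Filter

noncomputable section

/-!
Write a design point as `δ • ε` with `ε` a sign vector with `∏ εᵢ = 1`. Then
`‖x - δ • ε‖² = ∑ (|xᵢ| - δ)² + 2δ ∑ (|xᵢ| - xᵢ εᵢ)`, and the last sum vanishes exactly when `ε`
agrees with the signs of `x`. If `x` has an odd number of negative coordinates this `ε` is not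
admissible, and the cheapest admissible one flips it at a coordinate of least absolute value `m(x)`.
With `Real.sign 0 = 0` both cases read: the squared distance to the design is
`∑ (|xᵢ| - δ)² + 2δ m(x) (1 - ∏ sign xᵢ)`.

Averaging over the cube with the uniform product measure, each `(|xᵢ| - δ)²` has mean
`δ² - δ + 1/3`, `m` has mean `1/(d+1)` because `P(m ≥ t) = (1 - t)^d`, and `m ∏ sign xᵢ` has mean
zero because reflecting one coordinate preserves the measure and flips its sign.
-/

open ProbabilityTheory Finset Set
open scoped ENNReal

theorem MeasureTheory.Measure.pi_cond {ι : Type*} [Fintype ι] {α : ι → Type*}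
    [∀ i, MeasurableSpace (α i)] (μ : ∀ i, Measure (α i)) [∀ i, SigmaFinite (μ i)]
    {s : ∀ i, Set (α i)} (hs : ∀ i, MeasurableSet (s i)) (hfin : ∀ i, μ i (s i) ≠ ∞) :
    Measure.pi (fun i => (μ i)[|s i]) = (Measure.pi μ)[|univ.pi s] := by
  refine Measure.pi_eq fun t ht => ?_
  rw [cond_apply (MeasurableSet.univ_pi hs), ← pi_inter_distrib, Measure.pi_pi, Measure.pi_pi,
    ENNReal.prod_inv_distrib fun i _ j _ _ => Or.inr (hfin j), ← prod_mul_distrib]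
  exact prod_congr rfl fun i _ => (cond_apply (hs i) _ _).symm

theorem MeasureTheory.integral_sum_comp_eval {ι α : Type*} [Fintype ι] [MeasurableSpace α]
    {ν : Measure α} [IsProbabilityMeasure ν] {g : α → ℝ} (hg : Integrable g ν) :
    ∫ y, ∑ i, g (y i) ∂Measure.pi (fun _ : ι => ν) = Fintype.card ι * ∫ s, g s ∂ν := by
  rw [integral_finsetSum _ fun i _ => integrable_comp_eval hg]
  simp only [integral_comp_eval (μ := fun _ : ι => ν) hg.aestronglyMeasurable, sum_const,
    card_univ, nsmul_eq_mul]

namespace EvenSignDesign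

variable {ι : Type*} [Fintype ι]

lemma prod_eq_neg_one_pow_card {ε : ι → ℝ} (hε : ∀ i, ε i = 1 ∨ ε i = -1) :
    ∏ i, ε i = (-1) ^ #{i | ε i = -1} := by
  classical
  calc ∏ i, ε i = ∏ i, if ε i = -1 then -1 else 1 :=
        prod_congr rfl fun i _ => by rcases hε i with h | h <;> simp [h]
    _ = (-1) ^ #{i | ε i = -1} := by simp [prod_ite]

lemma even_ncard_iff_prod_eq_one {ε : ι → ℝ} (hε : ∀ i, ε i = 1 ∨ ε i = -1) :
    Even {i | ε i = -1}.ncard ↔ ∏ i, ε i = 1 := by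
  classical
  rw [prod_eq_neg_one_pow_card hε, neg_one_pow_eq_one_iff_even (by norm_num),
    ← Set.ncard_coe_finset, coe_filter_univ]

lemma mul_sign_eq_abs (r : ℝ) : r * Real.sign r = |r| := by
  rcases lt_trichotomy r 0 with h | rfl | h
  · rw [Real.sign_of_neg h, abs_of_neg h, mul_neg_one]
  · simp
  · rw [Real.sign_of_pos h, abs_of_pos h, mul_one]

lemma abs_prod_sign_le_one (x : ι → ℝ) : |∏ i, Real.sign (x i)| ≤ 1 := by
  rw [abs_prod]
  refine prod_le_one (fun _ _ => abs_nonneg _) fun i _ => ?_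
  rcases Real.sign_apply_eq (x i) with h | h | h <;> simp [h]

lemma measurable_sign : Measurable Real.sign :=
  Measurable.ite (measurableSet_lt measurable_id measurable_const) measurable_const <|
    Measurable.ite (measurableSet_lt measurable_const measurable_id) measurable_const
      measurable_const

lemma sum_sub_mul_sq {x ε : ι → ℝ} (hε : ∀ i, ε i = 1 ∨ ε i = -1) (δ : ℝ) :
    ∑ i, (x i - δ * ε i) ^ 2 = ∑ i, (|x i| - δ) ^ 2 + 2 * δ * ∑ i, (|x i| - x i * ε i) := by
  rw [mul_sum, ← sum_add_distrib]
  refine sum_congr rfl fun i _ => ?_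
  have hε2 : ε i ^ 2 = 1 := by rcases hε i with h | h <;> simp [h]
  linear_combination δ ^ 2 * hε2 - sq_abs (x i)

section minAbs

variable [Nonempty ι]

def minAbs (x : ι → ℝ) : ℝ := univ.inf' univ_nonempty fun i => |x i|

lemma minAbs_le (x : ι → ℝ) (i : ι) : minAbs x ≤ |x i| := inf'_le _ (mem_univ i)

lemma le_minAbs_iff {x : ι → ℝ} {t : ℝ} : t ≤ minAbs x ↔ ∀ i, t ≤ |x i| := by
  simp [minAbs]

lemma minAbs_nonneg (x : ι → ℝ) : 0 ≤ minAbs x := le_minAbs_iff.2 fun _ => abs_nonneg _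

lemma exists_abs_eq_minAbs (x : ι → ℝ) : ∃ j, |x j| = minAbs x := by
  obtain ⟨j, -, hj⟩ := exists_mem_eq_inf' univ_nonempty fun i => |x i|
  exact ⟨j, hj.symm⟩

lemma minAbs_eq_zero_of_eq_zero {x : ι → ℝ} {i : ι} (hi : x i = 0) : minAbs x = 0 :=
  le_antisymm (by simpa [hi] using minAbs_le x i) (minAbs_nonneg x)

lemma continuous_minAbs : Continuous (minAbs : (ι → ℝ) → ℝ) :=
  Continuous.finset_inf'_apply _ fun i _ => continuous_abs.comp (continuous_apply i)

lemma minAbs_mul_one_sub_prod_sign_le {x ε : ι → ℝ} (hε : ∀ i, ε i = 1 ∨ ε i = -1)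
    (hprod : ∏ i, ε i = 1) : minAbs x * (1 - ∏ i, Real.sign (x i)) ≤ ∑ i, (|x i| - x i * ε i) := by
  have hterm : ∀ i, 0 ≤ |x i| - x i * ε i := fun i => by
    rcases hε i with h | h <;> simp only [h, mul_one, mul_neg_one, sub_neg_eq_add] <;>
      linarith [le_abs_self (x i), neg_abs_le (x i)]
  by_cases hzero : ∃ i, x i = 0
  · obtain ⟨i, hi⟩ := hzero
    rw [minAbs_eq_zero_of_eq_zero hi, zero_mul]
    exact sum_nonneg fun i _ => hterm i
  push Not at hzero
  have hsign : ∀ i, Real.sign (x i) = 1 ∨ Real.sign (x i) = -1 := fun i =>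
    (Real.sign_apply_eq_of_ne_zero _ (hzero i)).symm
  rcases neg_one_pow_eq_or ℝ #{i | Real.sign (x i) = -1} with h | h <;>
    rw [← prod_eq_neg_one_pow_card hsign] at h
  · rw [h, sub_self, mul_zero]
    exact sum_nonneg fun i _ => hterm i
  -- `ε` and the sign vector of `x` have different products, so they differ at some `k`.
  obtain ⟨k, hk⟩ : ∃ k, ε k ≠ Real.sign (x k) := by
    by_contra! heq
    rw [← funext heq, hprod] at h
    norm_num at h
  have hεk : ε k = -Real.sign (x k) := by
    rcases hε k with h1 | h1 <;> rcases hsign k with h2 | h2 <;> simp_all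
  calc minAbs x * (1 - ∏ i, Real.sign (x i)) ≤ 2 * |x k| := by
        rw [h]; linarith [minAbs_le x k]
    _ = |x k| - x k * ε k := by rw [hεk, mul_neg, mul_sign_eq_abs]; ring
    _ ≤ ∑ i, (|x i| - x i * ε i) := single_le_sum (fun i _ => hterm i) (mem_univ k)

lemma exists_prod_eq_one_sum_le (x : ι → ℝ) :
    ∃ ε : ι → ℝ, (∀ i, ε i = 1 ∨ ε i = -1) ∧ ∏ i, ε i = 1 ∧
      ∑ i, (|x i| - x i * ε i) ≤ minAbs x * (1 - ∏ i, Real.sign (x i)) := by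
  classical
  set σ : ι → ℝ := fun i => if x i < 0 then -1 else 1
  have hσ : ∀ i, σ i = 1 ∨ σ i = -1 := fun i => by by_cases h : x i < 0 <;> simp [σ, h]
  have hxσ : ∀ i, x i * σ i = |x i| := fun i => by
    by_cases h : x i < 0
    · simp [σ, h, abs_of_neg h]
    · simp [σ, h, abs_of_nonneg (not_lt.1 h)]
  have hprod_sign : ∏ i, Real.sign (x i) ≤ 1 := (le_abs_self _).trans (abs_prod_sign_le_one x)
  rcases neg_one_pow_eq_or ℝ #{i | σ i = -1} with h | h <;>
    rw [← prod_eq_neg_one_pow_card hσ] at h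
  · refine ⟨σ, hσ, h, ?_⟩
    simp only [hxσ, sub_self, sum_const_zero]
    exact mul_nonneg (minAbs_nonneg x) (by linarith)
  -- Flipping `σ` where `|x|` is smallest fixes the parity at the least cost.
  obtain ⟨j, hj⟩ := exists_abs_eq_minAbs x
  refine ⟨Function.update σ j (-σ j), fun i => ?_, ?_, ?_⟩
  · rcases eq_or_ne i j with rfl | hij
    · rcases hσ i with h' | h' <;> simp [h']
    · simpa [hij] using hσ i
  · rw [prod_update_of_mem (mem_univ j), sdiff_singleton_eq_erase, neg_mul,
      mul_prod_erase univ σ (mem_univ j), h, neg_neg]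
  have hsum : ∑ i, (|x i| - x i * Function.update σ j (-σ j) i) = 2 * minAbs x := by
    rw [sum_eq_single j (fun i _ hij => by simp [hij, hxσ]) (by simp)]
    simp only [Function.update_self, mul_neg, hxσ, ← hj]
    ring
  rw [hsum]
  rcases (minAbs_nonneg x).eq_or_lt with hm | hm
  · simp [← hm]
  have hsign : ∀ i, Real.sign (x i) = σ i := fun i => by
    have hpos : 0 < |x i| := hm.trans_le (minAbs_le x i)
    rcases lt_or_gt_of_ne (abs_pos.1 hpos) with h' | h'
    · simp [σ, h', Real.sign_of_neg]
    · simp [σ, h'.not_gt, Real.sign_of_pos h']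
  simp only [hsign, h]
  linarith

lemma integrable_of_abs_le_minAbs {ν : Measure ℝ} [IsProbabilityMeasure ν]
    (hν : Integrable (|·|) ν) {f : (ι → ℝ) → ℝ} (hf : Measurable f) (hle : ∀ y, |f y| ≤ minAbs y) :
    Integrable f (Measure.pi fun _ => ν) := by
  obtain ⟨i⟩ := ‹Nonempty ι›
  exact (integrable_comp_eval hν (i := i)).mono' hf.aestronglyMeasurable
    (.of_forall fun y => (hle y).trans (minAbs_le y i))

lemma integral_minAbs_mul_prod_sign {ν : Measure ℝ} [SigmaFinite ν]
    (hν : MeasurePreserving Neg.neg ν ν) :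
    ∫ y, minAbs y * ∏ i, Real.sign (y i) ∂Measure.pi (fun _ : ι => ν) = 0 := by
  classical
  obtain ⟨i₀⟩ := ‹Nonempty ι›
  -- Negating the coordinate `i₀` preserves the measure and changes the sign of the integrand.
  let e : (ι → ℝ) ≃ᵐ (ι → ℝ) := MeasurableEquiv.piCongrRight fun i =>
    if i = i₀ then MeasurableEquiv.neg ℝ else MeasurableEquiv.refl ℝ
  have he : MeasurePreserving e (Measure.pi fun _ => ν) (Measure.pi fun _ => ν) :=
    measurePreserving_pi _ _ fun i => by
      by_cases h : i = i₀
      · simpa [h] using hν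
      · simpa [h] using MeasurePreserving.id ν
  have he_apply (y : ι → ℝ) : e y = Function.update y i₀ (-y i₀) := by
    ext i
    show (if i = i₀ then MeasurableEquiv.neg ℝ else MeasurableEquiv.refl ℝ) (y i) = _
    by_cases h : i = i₀
    · subst h; simp
    · simp [h]
  have hodd (y : ι → ℝ) : minAbs (e y) * ∏ i, Real.sign (e y i) =
      -(minAbs y * ∏ i, Real.sign (y i)) := by
    have habs : minAbs (e y) = minAbs y := by
      refine inf'_congr _ rfl fun i _ => ?_
      by_cases h : i = i₀
      · subst h; simp [he_apply]
      · simp [he_apply, h]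
    rw [habs, he_apply, ← mul_prod_erase univ _ (mem_univ i₀),
      ← mul_prod_erase univ (fun i => Real.sign (y i)) (mem_univ i₀),
      prod_congr rfl fun i hi => by rw [Function.update_of_ne (ne_of_mem_erase hi)],
      Function.update_self, Real.sign_neg]
    ring
  have := he.integral_comp' (fun y => minAbs y * ∏ i, Real.sign (y i))
  simp only [hodd, integral_neg] at this
  linarith

end minAbs

lemma norm_toLp_sub_sq {d : ℕ} {δ : ℝ} {ε : Fin d → ℝ} (hε : ∀ i, ε i = 1 ∨ ε i = -1)
    (y : Fin d → ℝ) {z : EuclideanSpace ℝ (Fin d)} (hz : z.ofLp = fun i => δ * ε i) :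
    ‖WithLp.toLp 2 y - z‖ ^ 2 = ∑ i, (|y i| - δ) ^ 2 + 2 * δ * ∑ i, (|y i| - y i * ε i) := by
  rw [EuclideanSpace.norm_sq_eq, ← sum_sub_mul_sq hε]
  simp [hz, sq_abs]

theorem iInf_design_norm_sub_sq {d : ℕ} [NeZero d] {δ : ℝ} (hδ : 0 ≤ δ) (y : Fin d → ℝ) :
    ⨅ z : design d δ, ‖WithLp.toLp 2 y - (z : EuclideanSpace ℝ (Fin d))‖ ^ 2 =
      ∑ i, (|y i| - δ) ^ 2 + 2 * δ * (minAbs y * (1 - ∏ i, Real.sign (y i))) := by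
  obtain ⟨ε, hε, hprod, hle⟩ := exists_prod_eq_one_sum_le y
  have hmem : WithLp.toLp 2 (fun i => δ * ε i) ∈ design d δ :=
    ⟨ε, hε, (even_ncard_iff_prod_eq_one hε).2 hprod, rfl⟩
  have : Nonempty (design d δ) := ⟨⟨_, hmem⟩⟩
  have hbdd : BddBelow (range fun z : design d δ =>
      ‖WithLp.toLp 2 y - (z : EuclideanSpace ℝ (Fin d))‖ ^ 2) :=
    ⟨0, by rintro _ ⟨z, rfl⟩; positivity⟩
  refine le_antisymm ?_ (le_ciInf ?_)
  · calc _ ≤ ‖WithLp.toLp 2 y - WithLp.toLp 2 (fun i => δ * ε i)‖ ^ 2 := ciInf_le hbdd ⟨_, hmem⟩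
      _ ≤ _ := by rw [norm_toLp_sub_sq hε y rfl]; gcongr
  · rintro ⟨z, ε', hε', heven, hz⟩
    rw [norm_toLp_sub_sq hε' y hz]
    gcongr
    exact minAbs_mul_one_sub_prod_sign_le hε' ((even_ncard_iff_prod_eq_one hε').1 heven)

def uniformIcc : Measure ℝ := volume[|Icc (-1) 1]

instance : IsProbabilityMeasure uniformIcc :=
  cond_isProbabilityMeasure_of_finite (by simp) (by simp)

lemma uniformIcc_apply {t : Set ℝ} : uniformIcc t = 2⁻¹ * volume (Icc (-1) 1 ∩ t) := by
  rw [uniformIcc, cond_apply measurableSet_Icc, Real.volume_Icc]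
  norm_num

lemma integral_uniformIcc (g : ℝ → ℝ) :
    ∫ s, g s ∂uniformIcc = 2⁻¹ * ∫ s in Icc (-1) 1, g s := by
  rw [uniformIcc, ProbabilityTheory.cond, integral_smul_measure, Real.volume_Icc]
  norm_num

lemma integrable_uniformIcc_of_continuous {g : ℝ → ℝ} (hg : Continuous g) :
    Integrable g uniformIcc :=
  (hg.integrableOn_Icc (a := -1) (b := 1)).smul_measure (by simp)

lemma measurePreserving_neg_uniformIcc : MeasurePreserving Neg.neg uniformIcc uniformIcc := by
  have := ((Measure.measurePreserving_neg volume).restrict_preimage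
    (measurableSet_Icc (a := (-1 : ℝ)) (b := 1))).smul_measure (volume (Icc (-1 : ℝ) 1))⁻¹
  simpa [uniformIcc, ProbabilityTheory.cond] using this

lemma uniformIcc_abs_lt {t : ℝ} (ht : t ≤ 1) :
    uniformIcc {s | |s| < t} = ENNReal.ofReal t := by
  have hsub : {s : ℝ | |s| < t} = Ioo (-t) t := by ext s; simp [abs_lt]
  rw [uniformIcc_apply, hsub, inter_eq_right.2 (Ioo_subset_Icc_self.trans
    (Icc_subset_Icc (by linarith) ht)), Real.volume_Ioo, show t - -t = 2 * t by ring,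
    ENNReal.ofReal_mul zero_le_two, ENNReal.ofReal_ofNat, ← mul_assoc,
    ENNReal.inv_mul_cancel two_ne_zero ENNReal.ofNat_ne_top, one_mul]

lemma integral_pi_uniformIcc {d : ℕ} (f : (Fin d → ℝ) → ℝ) :
    ∫ y, f y ∂Measure.pi (fun _ => uniformIcc) =
      (∫ y in univ.pi fun _ => Icc (-1) 1, f y) / 2 ^ d := by
  rw [uniformIcc, Measure.pi_cond _ (fun _ => measurableSet_Icc) (fun _ => by simp), ← volume_pi,
    ProbabilityTheory.cond, integral_smul_measure, volume_pi_pi]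
  norm_num [Real.volume_Icc, div_eq_inv_mul]

lemma quantErr_eq_integral (d : ℕ) (Z : Set (EuclideanSpace ℝ (Fin d))) :
    quantErr d Z = ∫ y, ⨅ z : Z, ‖WithLp.toLp 2 y - (z : EuclideanSpace ℝ (Fin d))‖ ^ 2
      ∂Measure.pi (fun _ => uniformIcc) := by
  rw [quantErr, integral_pi_uniformIcc,
    ← (PiLp.volume_preserving_toLp (Fin d)).setIntegral_preimage_emb
      (MeasurableEquiv.toLp 2 _).measurableEmbedding]
  congr 3
  ext y
  simp only [cube, Set.mem_preimage, mem_univ_pi]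
  rfl

lemma integral_abs_sub_sq_uniformIcc (δ : ℝ) :
    ∫ s, (|s| - δ) ^ 2 ∂uniformIcc = δ ^ 2 - δ + 1 / 3 := by
  have hcont : Continuous fun s : ℝ => (|s| - δ) ^ 2 := by fun_prop
  rw [integral_uniformIcc, integral_Icc_eq_integral_Ioc,
    ← intervalIntegral.integral_of_le (by norm_num),
    ← intervalIntegral.integral_add_adjacent_intervals (b := 0)
      (hcont.intervalIntegrable _ _) (hcont.intervalIntegrable _ _)]
  have hneg : ∫ s in (-1 : ℝ)..0, (|s| - δ) ^ 2 = ∫ s in (-1 : ℝ)..0, (s + δ) ^ 2 :=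
    intervalIntegral.integral_congr fun s hs => by
      rw [Set.uIcc_of_le (by norm_num)] at hs
      rw [abs_of_nonpos hs.2]; ring
  have hpos : ∫ s in (0 : ℝ)..1, (|s| - δ) ^ 2 = ∫ s in (0 : ℝ)..1, (s - δ) ^ 2 :=
    intervalIntegral.integral_congr fun s hs => by
      rw [Set.uIcc_of_le (by norm_num)] at hs
      rw [abs_of_nonneg hs.1]
  rw [hneg, hpos, intervalIntegral.integral_comp_add_right (· ^ 2),
    intervalIntegral.integral_comp_sub_right (· ^ 2), integral_pow, integral_pow]
  ring

lemma integrable_minAbs_uniformIcc [Nonempty ι] :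
    Integrable minAbs (Measure.pi fun _ : ι => uniformIcc) :=
  integrable_of_abs_le_minAbs (integrable_uniformIcc_of_continuous continuous_abs)
    continuous_minAbs.measurable fun y => (abs_of_nonneg (minAbs_nonneg y)).le

lemma integral_minAbs_uniformIcc [Nonempty ι] :
    ∫ y, minAbs y ∂Measure.pi (fun _ : ι => uniformIcc) = 1 / (Fintype.card ι + 1) := by
  obtain ⟨i⟩ := ‹Nonempty ι›
  have hle : ∀ᵐ y ∂Measure.pi (fun _ : ι => uniformIcc), minAbs y ≤ 1 := by
    filter_upwards [Measure.tendsto_eval_ae_ae.eventually (ae_cond_mem measurableSet_Icc)]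
      with y hy
    exact (minAbs_le y i).trans (abs_le.2 hy)
  have htail : ∀ t ∈ Ioc (0 : ℝ) 1,
      (Measure.pi fun _ : ι => uniformIcc).real {y | t ≤ minAbs y} = (1 - t) ^ Fintype.card ι := by
    intro t ht
    have hset : {y : ι → ℝ | t ≤ minAbs y} = univ.pi fun _ => {s | |s| < t}ᶜ := by
      ext y; simp [le_minAbs_iff]
    rw [measureReal_def, hset, Measure.pi_pi,
      prob_compl_eq_one_sub (measurableSet_lt continuous_abs.measurable measurable_const),
      uniformIcc_abs_lt ht.2, prod_const, card_univ, ENNReal.toReal_pow,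
      ENNReal.toReal_sub_of_le (ENNReal.ofReal_le_one.2 ht.2) ENNReal.one_ne_top,
      ENNReal.toReal_ofReal ht.1.le, ENNReal.toReal_one]
  rw [integrable_minAbs_uniformIcc.integral_eq_integral_Ioc_meas_le (.of_forall minAbs_nonneg) hle,
    setIntegral_congr_fun measurableSet_Ioc htail, ← intervalIntegral.integral_of_le zero_le_one,
    intervalIntegral.integral_comp_sub_left (· ^ Fintype.card ι) 1]
  simp

lemma integral_sum_add_minAbs_mul_one_sub_prod_sign [Nonempty ι] (δ : ℝ) :
    ∫ y, (∑ i, (|y i| - δ) ^ 2 + 2 * δ * (minAbs y * (1 - ∏ i, Real.sign (y i))))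
      ∂Measure.pi (fun _ : ι => uniformIcc) =
      Fintype.card ι * (δ ^ 2 - δ + 1 / 3) + 2 * δ / (Fintype.card ι + 1) := by
  have hsign : Measurable fun y : ι → ℝ => ∏ i, Real.sign (y i) :=
    Finset.measurable_prod _ fun i _ => measurable_sign.comp (measurable_pi_apply i)
  have hsq : Integrable (fun s : ℝ => (|s| - δ) ^ 2) uniformIcc :=
    integrable_uniformIcc_of_continuous (by fun_prop)
  have hsum : Integrable (fun y : ι → ℝ => ∑ i, (|y i| - δ) ^ 2)
      (Measure.pi fun _ => uniformIcc) :=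
    integrable_finsetSum _ fun i _ =>
      integrable_comp_eval (μ := fun _ : ι => uniformIcc) (i := i) hsq
  have hmin : Integrable minAbs (Measure.pi fun _ : ι => uniformIcc) :=
    integrable_minAbs_uniformIcc
  have hminSign : Integrable (fun y : ι → ℝ => minAbs y * ∏ i, Real.sign (y i))
      (Measure.pi fun _ => uniformIcc) :=
    integrable_of_abs_le_minAbs (integrable_uniformIcc_of_continuous continuous_abs)
      (continuous_minAbs.measurable.mul hsign) fun y => by
        rw [abs_mul, abs_of_nonneg (minAbs_nonneg y)]
        exact mul_le_of_le_one_right (minAbs_nonneg y) (abs_prod_sign_le_one y)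
  have hcorr : Integrable (fun y : ι → ℝ =>
      2 * δ * minAbs y - 2 * δ * (minAbs y * ∏ i, Real.sign (y i)))
      (Measure.pi fun _ => uniformIcc) :=
    (hmin.const_mul _).sub (hminSign.const_mul _)
  simp_rw [mul_one_sub, mul_sub]
  rw [integral_add hsum hcorr,
    integral_sub (hmin.const_mul _) (hminSign.const_mul _), integral_const_mul, integral_const_mul,
    integral_sum_comp_eval hsq,
    integral_abs_sub_sq_uniformIcc, integral_minAbs_uniformIcc,
    integral_minAbs_mul_prod_sign measurePreserving_neg_uniformIcc]
  ring

end EvenSignDesign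

open EvenSignDesign in
theorem stmt3_general (d : ℕ) (hd : 2 ≤ d) (δ : ℝ) (hδ0 : 0 < δ) :
    quantErr d (design d δ) = d * (δ ^ 2 - δ + 1 / 3) + 2 * δ / (d + 1) := by
  have : NeZero d := ⟨by omega⟩
  simp only [quantErr_eq_integral, iInf_design_norm_sub_sq hδ0.le,
    integral_sum_add_minAbs_mul_one_sub_prod_sign, Fintype.card_fin]

theorem stmt3 (d : ℕ) (hd : 2 ≤ d) (δ : ℝ) (hδ0 : 0 < δ) (hδ1 : δ ≤ 1) :
    quantErr d (design d δ) = d * (δ ^ 2 - δ + 1 / 3) + 2 * δ / (d + 1) :=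
  stmt3_general d hd δ hδ0

end
end

section
/- Let d ≥ 2 be an integer and δ ∈ ℝ. Then ∫_{U_1} ‖x − δ·1‖² dx = δ² − δ + 1/3 + 4δ/(d(d+1)), where the integral is with respect to d-dimensional Lebesgue measure. -/
open MeasureTheory Filter

noncomputable section

/-!
Splitting off the first coordinate, `U_1` becomes `{(t, y) : -1 ≤ t ≤ 0, y ∈ [-t, 1]^(d-1)}`,
and `‖x - δ·1‖²` splits into a sum of one-variable squares. The fibre over `t` is a cube of
side `1 + t`, so Fubini reduces the integral to a polynomial integral in `t + 1` over `[-1, 0]`.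
-/

open Set

theorem integral_comp_eval_pi {ι E : Type*} [Fintype ι] [DecidableEq ι] {X : ι → Type*}
    {mX : ∀ i, MeasurableSpace (X i)} {μ : (i : ι) → Measure (X i)} [∀ i, IsFiniteMeasure (μ i)]
    [NormedAddCommGroup E] [NormedSpace ℝ E] {i : ι} {f : X i → E}
    (hf : AEStronglyMeasurable f (μ i)) :
    ∫ x, f (x i) ∂Measure.pi μ = (∏ j ∈ Finset.univ.erase i, (μ j).real univ) • ∫ x, f x ∂μ i := by
  rw [← integral_map (measurable_pi_apply i).aemeasurable
      (by rw [Measure.pi_map_eval]; exact hf.smul_measure _),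
    Measure.pi_map_eval, integral_smul_measure, ENNReal.toReal_prod]
  rfl

theorem setIntegral_univ_pi_Icc_const_add_sum {n : ℕ} {a b : ℝ} (hab : a ≤ b) (c : ℝ)
    {f : ℝ → ℝ} (hf : IntegrableOn f (Icc a b)) :
    ∫ y in univ.pi fun _ : Fin n => Icc a b, (c + ∑ j, f (y j)) =
      (b - a) ^ n * c + n * (b - a) ^ (n - 1) * ∫ u in Icc a b, f u := by
  classical
  have hint (j : Fin n) : Integrable (fun y : Fin n → ℝ => f (y j))
      (Measure.pi fun _ => volume.restrict (Icc a b)) :=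
    integrable_comp_eval (i := j) hf
  have hcoord (j : Fin n) : ∫ y, f (y j) ∂Measure.pi (fun _ => volume.restrict (Icc a b)) =
      (b - a) ^ (n - 1) * ∫ u in Icc a b, f u := by
    rw [integral_comp_eval_pi (μ := fun _ => volume.restrict (Icc a b)) hf.aestronglyMeasurable]
    simp [hab, Finset.card_erase_of_mem]
  rw [volume_pi, Measure.restrict_pi_pi, integral_add (integrable_const c)
      (integrable_finsetSum _ fun j _ => hint j),
    integral_finsetSum _ fun j _ => hint j, integral_const]
  simp [hcoord, Measure.real, Measure.pi_univ, hab, mul_assoc]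

theorem setIntegral_prod_fiberwise {α β E : Type*} [MeasurableSpace α] [MeasurableSpace β]
    [NormedAddCommGroup E] [NormedSpace ℝ E] {μ : Measure α} {ν : Measure β} [SFinite μ]
    [SFinite ν] {s : Set α} {t : α → Set β} (hs : MeasurableSet s)
    (hst : MeasurableSet {p : α × β | p.1 ∈ s ∧ p.2 ∈ t p.1})
    {f : α × β → E} (hf : IntegrableOn f {p | p.1 ∈ s ∧ p.2 ∈ t p.1} (μ.prod ν)) :
    ∫ p in {p | p.1 ∈ s ∧ p.2 ∈ t p.1}, f p ∂μ.prod ν = ∫ x in s, ∫ y in t x, f (x, y) ∂ν ∂μ := by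
  rw [← integral_indicator hst, integral_prod _ ((integrable_indicator_iff hst).2 hf),
    ← integral_indicator hs]
  congr 1 with x
  by_cases hx : x ∈ s
  · have hfiber : Prod.mk x ⁻¹' {p : α × β | p.1 ∈ s ∧ p.2 ∈ t p.1} = t x := by
      ext y; simp [hx]
    rw [indicator_of_mem hx, ← integral_indicator (hfiber ▸ measurable_prodMk_left hst), ← hfiber]
    rfl
  · simp [indicator, hx]

def euclideanFinSuccEquiv (n : ℕ) : ℝ × (Fin n → ℝ) ≃ᵐ EuclideanSpace ℝ (Fin (n + 1)) :=
  (MeasurableEquiv.piFinSuccAbove (fun _ => ℝ) 0).symm.trans (MeasurableEquiv.toLp 2 _)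

@[simp]
theorem euclideanFinSuccEquiv_apply_zero {n : ℕ} (p : ℝ × (Fin n → ℝ)) :
    euclideanFinSuccEquiv n p 0 = p.1 := by
  simp [euclideanFinSuccEquiv, MeasurableEquiv.piFinSuccAbove_symm_apply]

@[simp]
theorem euclideanFinSuccEquiv_apply_succ {n : ℕ} (p : ℝ × (Fin n → ℝ)) (j : Fin n) :
    euclideanFinSuccEquiv n p j.succ = p.2 j := by
  simp [euclideanFinSuccEquiv, MeasurableEquiv.piFinSuccAbove_symm_apply]

theorem measurePreserving_euclideanFinSuccEquiv (n : ℕ) :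
    MeasurePreserving (euclideanFinSuccEquiv n) (volume.prod volume) volume :=
  (PiLp.volume_preserving_toLp _).comp (volume_preserving_piFinSuccAbove (fun _ => ℝ) 0).symm

theorem norm_sub_const_sq {d : ℕ} (x : EuclideanSpace ℝ (Fin d)) (δ : ℝ) :
    ‖x - const d δ‖ ^ 2 = ∑ i, (x i - δ) ^ 2 := by
  simp [EuclideanSpace.norm_sq_eq, const]

section UZeroCoordinates

variable (n : ℕ)

theorem preimage_euclideanFinSuccEquiv_U_zero :
    euclideanFinSuccEquiv (n + 1) ⁻¹' U (n + 2) 0 =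
      {p | p.1 ∈ Icc (-1) 0 ∧ p.2 ∈ univ.pi fun _ => Icc (-p.1) 1} := by
  ext ⟨t, y⟩
  simp only [U, mem_preimage, mem_ofPred_eq, Fin.forall_fin_succ, ne_eq, not_true_eq_false,
    IsEmpty.forall_iff, true_and, Fin.succ_ne_zero, not_false_eq_true, forall_const,
    euclideanFinSuccEquiv_apply_zero, euclideanFinSuccEquiv_apply_succ, mem_Icc, mem_univ_pi]
  rcases le_or_gt t 0 with ht | ht
  · rw [abs_of_nonpos ht]
    tauto
  · simp [ht.not_ge]

theorem measurableSet_U_zero_coordinates :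
    MeasurableSet
      {p : ℝ × (Fin n → ℝ) | p.1 ∈ Icc (-1) 0 ∧ p.2 ∈ univ.pi fun _ => Icc (-p.1) 1} := by
  simp only [mem_Icc, mem_univ_pi]
  measurability

theorem integrableOn_U_zero_coordinates {f : ℝ × (Fin n → ℝ) → ℝ} (hf : Continuous f) :
    IntegrableOn f {p | p.1 ∈ Icc (-1) 0 ∧ p.2 ∈ univ.pi fun _ => Icc (-p.1) 1}
      (volume.prod volume) := by
  have hK : IsCompact (Icc (-1 : ℝ) 0 ×ˢ univ.pi fun _ : Fin n => Icc (0 : ℝ) 1) :=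
    isCompact_Icc.prod (isCompact_univ_pi fun _ => isCompact_Icc)
  refine (hf.continuousOn.integrableOn_compact hK).mono_set ?_
  rintro ⟨t, y⟩ ⟨ht, hy⟩
  exact ⟨ht, fun j _ => ⟨by linarith [ht.2, (hy j trivial).1], (hy j trivial).2⟩⟩

end UZeroCoordinates

theorem integral_sq_sub {a b : ℝ} (hab : a ≤ b) (δ : ℝ) :
    ∫ u in Icc a b, (u - δ) ^ 2 = ((b - δ) ^ 3 - (a - δ) ^ 3) / 3 := by
  rw [integral_Icc_eq_integral_Ioc, ← intervalIntegral.integral_of_le hab,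
    intervalIntegral.integral_comp_sub_right (· ^ 2) δ, integral_pow]
  ring

theorem setIntegral_fiber_U_zero_sq_sub (m : ℕ) (δ : ℝ) {t : ℝ} (ht : -1 ≤ t) :
    ∫ y in univ.pi fun _ : Fin (m + 1) => Icc (-t) 1, ((t - δ) ^ 2 + ∑ j, (y j - δ) ^ 2) =
      (t + 1) ^ (m + 1) * (t - δ) ^ 2 +
        (m + 1) * (t + 1) ^ m * (((1 - δ) ^ 3 - (-t - δ) ^ 3) / 3) := by
  have hle : -t ≤ 1 := by linarith
  rw [setIntegral_univ_pi_Icc_const_add_sum (f := fun u => (u - δ) ^ 2) hle _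
    (Continuous.integrableOn_Icc (by fun_prop)), integral_sq_sub hle]
  push_cast
  ring_nf

theorem integral_neg_one_zero_add_one_pow (k : ℕ) :
    ∫ t in (-1 : ℝ)..0, (t + 1) ^ k = 1 / (k + 1) := by
  rw [intervalIntegral.integral_comp_add_right (· ^ k) 1]
  norm_num [integral_pow]

theorem integral_Icc_neg_one_zero_fiber_sq_sub (m : ℕ) (δ : ℝ) :
    ∫ t in Icc (-1 : ℝ) 0, ((t + 1) ^ (m + 1) * (t - δ) ^ 2 +
        (m + 1) * (t + 1) ^ m * (((1 - δ) ^ 3 - (-t - δ) ^ 3) / 3)) =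
      δ ^ 2 - δ + 1 / 3 + 4 * δ / ((m + 2) * (m + 3)) := by
  have hexpand (t : ℝ) : (t + 1) ^ (m + 1) * (t - δ) ^ 2 +
      (m + 1) * (t + 1) ^ m * (((1 - δ) ^ 3 - (-t - δ) ^ 3) / 3) =
      ((1 + δ) ^ 2 + (m + 1) * (1 - δ) ^ 2) * (t + 1) ^ (m + 1) -
        (2 * (1 + δ) + (m + 1) * (1 - δ)) * (t + 1) ^ (m + 2) +
        (1 + (m + 1) / 3) * (t + 1) ^ (m + 3) := by
    ring
  have hint (k : ℕ) (c : ℝ) : IntervalIntegrable (fun t : ℝ => c * (t + 1) ^ k) volume (-1) 0 :=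
    (by fun_prop : Continuous fun t : ℝ => c * (t + 1) ^ k).intervalIntegrable _ _
  simp only [hexpand]
  rw [integral_Icc_eq_integral_Ioc, ← intervalIntegral.integral_of_le (by norm_num),
    intervalIntegral.integral_add ((hint _ _).sub (hint _ _)) (hint _ _),
    intervalIntegral.integral_sub (hint _ _) (hint _ _)]
  simp only [intervalIntegral.integral_const_mul, integral_neg_one_zero_add_one_pow]
  push_cast
  field_simp
  ring

theorem stmt6 (d : ℕ) (hd : 2 ≤ d) (δ : ℝ) :
    ∫ x in U d ⟨0, by omega⟩, ‖x - const d δ‖ ^ 2 =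
      δ ^ 2 - δ + 1 / 3 + 4 * δ / (d * (d + 1)) := by
  obtain ⟨m, rfl⟩ : ∃ m, d = m + 2 := ⟨d - 2, by omega⟩
  calc ∫ x in U (m + 2) ⟨0, by omega⟩, ‖x - const (m + 2) δ‖ ^ 2
      = ∫ p in {p : ℝ × (Fin (m + 1) → ℝ) |
            p.1 ∈ Icc (-1) 0 ∧ p.2 ∈ univ.pi fun _ => Icc (-p.1) 1},
          ((p.1 - δ) ^ 2 + ∑ j, (p.2 j - δ) ^ 2) ∂volume.prod volume := by
        rw [← (measurePreserving_euclideanFinSuccEquiv (m + 1)).setIntegral_preimage_emb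
          (MeasurableEquiv.measurableEmbedding _), Fin.zero_eta,
          preimage_euclideanFinSuccEquiv_U_zero]
        simp only [norm_sub_const_sq, Fin.sum_univ_succ (n := m + 1),
          euclideanFinSuccEquiv_apply_zero, euclideanFinSuccEquiv_apply_succ]
    _ = ∫ t in Icc (-1) 0, ∫ y in univ.pi fun _ : Fin (m + 1) => Icc (-t) 1,
          ((t - δ) ^ 2 + ∑ j, (y j - δ) ^ 2) :=
        setIntegral_prod_fiberwise (t := fun t => univ.pi fun _ => Icc (-t) 1) measurableSet_Icc
          (measurableSet_U_zero_coordinates _)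
          (integrableOn_U_zero_coordinates _ (by fun_prop))
    _ = ∫ t in Icc (-1 : ℝ) 0, ((t + 1) ^ (m + 1) * (t - δ) ^ 2 +
          (m + 1) * (t + 1) ^ m * (((1 - δ) ^ 3 - (-t - δ) ^ 3) / 3)) :=
        setIntegral_congr_fun measurableSet_Icc fun t ht =>
          setIntegral_fiber_U_zero_sq_sub m δ ht.1
    _ = _ := by
        rw [integral_Icc_neg_one_zero_fiber_sq_sub]
        push_cast
        ring_nf
end
end

section
/- Let d ≥ 2 and let V = C_0 ∪ ⋃_{j=1}^d U_j ⊂ ℝ^d. Then the centroid of V equals δ*·1, where δ* = 1/2 − 1/(d(d+1)); that is, for every coordinate i, (1/vol(V)) ∫_V x_i dx = 1/2 − 1/(d(d+1)). -/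
open MeasureTheory Filter

/-!
Cutting `U_j` by the hyperplanes `x_j = t`, `-1 ≤ t ≤ 0`, gives the cubes `[-t, 1]^{d-1}`, so
every integral over `U_j` is a one-variable integral of a polynomial in `t` against
`(1 + t)^{d-1}`: `vol U_j = 1/d`, and the centroid of the slice is `(1 - t)/2` in the other
coordinates. The pieces `C_0, U_1, …, U_d` overlap only in hyperplanes, so `vol V = 2`, and
`∫_V x_i` is `1/2` from `C_0`, plus one contribution of `U_i` and `d - 1` equal contributions of
the other `U_j`.
-/

open Set

theorem setIntegral_prod_fiber {α β E : Type*} [MeasurableSpace α] [MeasurableSpace β]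
    [NormedAddCommGroup E] [NormedSpace ℝ E] {μ : Measure α} {ν : Measure β} [SFinite μ]
    [SFinite ν] {A : Set α} {T : α → Set β} (hA : MeasurableSet A)
    (hs : MeasurableSet {p : α × β | p.1 ∈ A ∧ p.2 ∈ T p.1}) {f : α × β → E}
    (hf : IntegrableOn f {p | p.1 ∈ A ∧ p.2 ∈ T p.1} (μ.prod ν)) :
    ∫ p in {p : α × β | p.1 ∈ A ∧ p.2 ∈ T p.1}, f p ∂(μ.prod ν) =
      ∫ x in A, ∫ y in T x, f (x, y) ∂ν ∂μ := by
  rw [← integral_indicator hs, integral_prod _ ((integrable_indicator_iff hs).2 hf),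
    ← integral_indicator hA]
  congr 1 with x
  by_cases hx : x ∈ A
  · have hT : T x = Prod.mk x ⁻¹' {p : α × β | p.1 ∈ A ∧ p.2 ∈ T p.1} := by
      ext y; simp [hx]
    rw [indicator_of_mem hx, hT, ← integral_indicator (measurable_prodMk_left hs)]
    rfl
  · simp [hx]

theorem setIntegral_univ_pi_prod {ι 𝕜 : Type*} [Fintype ι] [RCLike 𝕜] {X : ι → Type*}
    {mX : ∀ i, MeasurableSpace (X i)} (μ : ∀ i, Measure (X i)) [∀ i, SigmaFinite (μ i)]
    (s : ∀ i, Set (X i)) (f : ∀ i, X i → 𝕜) :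
    ∫ x in univ.pi s, ∏ i, f i (x i) ∂Measure.pi μ = ∏ i, ∫ t in s i, f i t ∂μ i := by
  rw [Measure.restrict_pi_pi, integral_fintype_prod_eq_prod]

theorem setIntegral_Icc_id {a b : ℝ} (hab : a ≤ b) : ∫ t in Icc a b, t = (b ^ 2 - a ^ 2) / 2 := by
  rw [integral_Icc_eq_integral_Ioc, ← intervalIntegral.integral_of_le hab, integral_id]

theorem setIntegral_Icc_affine_mul_one_add_pow (a b : ℝ) (c : ℕ) :
    ∫ t in Icc (-1 : ℝ) 0, (a + b * t) * (1 + t) ^ c =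
      a / (c + 1) + b * (1 / (c + 2) - 1 / (c + 1)) := by
  have h (t : ℝ) : (a + b * t) * (1 + t) ^ c =
      (fun u => (a - b) * u ^ c + b * u ^ (c + 1)) (1 + t) := by
    ring
  rw [integral_Icc_eq_integral_Ioc, ← intervalIntegral.integral_of_le (by norm_num)]
  simp_rw [h]
  rw [intervalIntegral.integral_comp_add_left (fun u => (a - b) * u ^ c + b * u ^ (c + 1)),
    intervalIntegral.integral_add ((by fun_prop : Continuous _).intervalIntegrable _ _)
      ((by fun_prop : Continuous _).intervalIntegrable _ _),
    intervalIntegral.integral_const_mul, intervalIntegral.integral_const_mul, integral_pow,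
    integral_pow]
  push_cast
  field_simp
  ring

section Box

variable {ι : Type*} [Fintype ι] {a b : ℝ}

theorem volume_real_univ_pi_Icc (hab : a ≤ b) :
    volume.real (univ.pi fun _ : ι => Icc a b) = (b - a) ^ Fintype.card ι := by
  rw [pi_univ_Icc, measureReal_def, Real.volume_Icc_pi_toReal fun _ => hab, Finset.prod_const,
    Finset.card_univ]

theorem setIntegral_univ_pi_Icc_apply [DecidableEq ι] (hab : a ≤ b) (k : ι) :
    ∫ x in univ.pi fun _ : ι => Icc a b, x k = (a + b) / 2 * (b - a) ^ Fintype.card ι := by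
  have h := setIntegral_univ_pi_prod (fun _ : ι => volume) (fun _ => Icc a b)
    fun i t => if i = k then t else 1
  simp only [Finset.prod_ite_eq', Finset.mem_univ, if_true, ← volume_pi] at h
  have hcompl : ∏ i ∈ {k}ᶜ, ∫ t in Icc a b, (if i = k then t else 1) = ∏ i ∈ {k}ᶜ, (b - a) :=
    Finset.prod_congr rfl fun i hi => by
      have hik : i ≠ k := by simpa using hi
      simp only [hik, if_false, setIntegral_const, Real.volume_real_Icc_of_le hab, smul_eq_mul,
        mul_one]
  rw [h, Fintype.prod_eq_mul_prod_compl k]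
  simp only [↓reduceIte]
  rw [setIntegral_Icc_id hab, hcompl, ← Finset.card_univ, ← Finset.prod_const,
    Fintype.prod_eq_mul_prod_compl k]
  ring

end Box

section Wedge

def wedge (ι : Type*) : Set (ℝ × (ι → ℝ)) :=
  {p | p.1 ∈ Icc (-1) 0 ∧ p.2 ∈ univ.pi fun _ => Icc (-p.1) 1}

variable {ι : Type*}

theorem isClosed_wedge : IsClosed (wedge ι) := by
  have hcoord (k : ι) : Continuous fun p : ℝ × (ι → ℝ) => p.2 k := by fun_prop
  simp only [wedge, mem_Icc, mem_univ_pi, ofPred_and, ofPred_forall]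
  exact ((isClosed_le continuous_const continuous_fst).inter
    (isClosed_le continuous_fst continuous_const)).inter (isClosed_iInter fun k =>
      (isClosed_le continuous_fst.neg (hcoord k)).inter (isClosed_le (hcoord k) continuous_const))

theorem isCompact_wedge : IsCompact (wedge ι) := by
  refine ((isCompact_Icc (a := -1) (b := 0)).prod
    (isCompact_univ_pi fun _ : ι => isCompact_Icc (a := (0 : ℝ)) (b := 1))).of_isClosed_subset
    isClosed_wedge ?_
  rintro ⟨t, y⟩ ⟨ht, hy⟩
  exact ⟨ht, fun k _ => ⟨by linarith [ht.2, (hy k trivial).1], (hy k trivial).2⟩⟩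

variable [Fintype ι]

theorem setIntegral_wedge {f : ℝ × (ι → ℝ) → ℝ} (hf : Continuous f) :
    ∫ p in wedge ι, f p = ∫ t in Icc (-1) 0, ∫ y in univ.pi fun _ => Icc (-t) 1, f (t, y) :=
  setIntegral_prod_fiber (T := fun t => univ.pi fun _ => Icc (-t) 1) measurableSet_Icc
    isClosed_wedge.measurableSet (hf.continuousOn.integrableOn_compact isCompact_wedge)

theorem setIntegral_wedge_of_slice {f : ℝ × (ι → ℝ) → ℝ} (hf : Continuous f) (a b : ℝ)
    (hslice : ∀ t ∈ Icc (-1 : ℝ) 0,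
      ∫ y in univ.pi fun _ => Icc (-t) 1, f (t, y) = (a + b * t) * (1 + t) ^ Fintype.card ι) :
    ∫ p in wedge ι, f p =
      a / (Fintype.card ι + 1) + b * (1 / (Fintype.card ι + 2) - 1 / (Fintype.card ι + 1)) := by
  rw [setIntegral_wedge hf, setIntegral_congr_fun measurableSet_Icc hslice,
    setIntegral_Icc_affine_mul_one_add_pow]

theorem setIntegral_wedge_one : ∫ _ in wedge ι, (1 : ℝ) = 1 / (Fintype.card ι + 1) := by
  rw [setIntegral_wedge_of_slice continuous_const 1 0 fun t ht => ?_]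
  · ring
  · rw [setIntegral_const, volume_real_univ_pi_Icc (by linarith [ht.1])]
    simp only [smul_eq_mul]
    ring

theorem setIntegral_wedge_fst :
    ∫ p in wedge ι, p.1 = 1 / (Fintype.card ι + 2) - 1 / (Fintype.card ι + 1) := by
  rw [setIntegral_wedge_of_slice continuous_fst 0 1 fun t ht => ?_]
  · ring
  · rw [setIntegral_const, volume_real_univ_pi_Icc (by linarith [ht.1])]
    simp only [smul_eq_mul]
    ring

theorem setIntegral_wedge_snd [DecidableEq ι] (k : ι) :
    ∫ p in wedge ι, p.2 k = 1 / (Fintype.card ι + 1) - 1 / (2 * (Fintype.card ι + 2)) := by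
  rw [setIntegral_wedge_of_slice (by fun_prop) (1 / 2) (-1 / 2) fun t ht => ?_]
  · field_simp
    ring
  · rw [setIntegral_univ_pi_Icc_apply (by linarith [ht.1])]
    ring

end Wedge

section SplitAt

variable {n : ℕ}

-- `splitAt j x = (x j, fun k => x (j.succAbove k))` holds by `rfl`.
def splitAt (j : Fin (n + 1)) : EuclideanSpace ℝ (Fin (n + 1)) ≃ᵐ ℝ × (Fin n → ℝ) :=
  (MeasurableEquiv.toLp 2 (Fin (n + 1) → ℝ)).symm.trans
    (MeasurableEquiv.piFinSuccAbove (fun _ => ℝ) j)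

theorem measurePreserving_splitAt (j : Fin (n + 1)) : MeasurePreserving (splitAt j) :=
  (EuclideanSpace.volume_preserving_symm_measurableEquiv_toLp _).trans
    (volume_preserving_piFinSuccAbove _ j)

theorem U_eq_preimage_wedge (j : Fin (n + 1)) : U (n + 1) j = splitAt j ⁻¹' wedge (Fin n) := by
  ext x
  change _ ↔ x j ∈ Icc (-1) 0 ∧ ∀ k ∈ univ, x (j.succAbove k) ∈ Icc (-x j) 1
  simp only [U, mem_ofPred_eq, mem_Icc, mem_univ, true_implies, Fin.forall_iff_succAbove j,
    ne_eq, not_true_eq_false, false_implies, Fin.succAbove_ne, not_false_eq_true]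
  constructor
  · rintro ⟨h₁, h₂, -, hk⟩
    exact ⟨⟨h₁, h₂⟩, fun k => by rw [abs_of_nonpos h₂] at hk; exact hk k⟩
  · rintro ⟨⟨h₁, h₂⟩, hk⟩
    exact ⟨h₁, h₂, trivial, fun k => by rw [abs_of_nonpos h₂]; exact hk k⟩

theorem setIntegral_U (j : Fin (n + 1)) (g : ℝ × (Fin n → ℝ) → ℝ) :
    ∫ x in U (n + 1) j, g (splitAt j x) = ∫ p in wedge (Fin n), g p := by
  rw [U_eq_preimage_wedge]
  exact (measurePreserving_splitAt j).setIntegral_preimage_emb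
    (splitAt j).measurableEmbedding g _

theorem setIntegral_U_one (j : Fin (n + 1)) : ∫ _ in U (n + 1) j, (1 : ℝ) = 1 / (n + 1) := by
  rw [setIntegral_U j fun _ => 1, setIntegral_wedge_one, Fintype.card_fin]

theorem setIntegral_U_apply_self (j : Fin (n + 1)) :
    ∫ x in U (n + 1) j, x j = 1 / (n + 2) - 1 / (n + 1) := by
  refine (setIntegral_U j Prod.fst).trans ?_
  rw [setIntegral_wedge_fst, Fintype.card_fin]

theorem setIntegral_U_apply_of_ne {i j : Fin (n + 1)} (hij : i ≠ j) :
    ∫ x in U (n + 1) j, x i = 1 / (n + 1) - 1 / (2 * (n + 2)) := by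
  obtain ⟨k, rfl⟩ := Fin.exists_succAbove_eq hij
  refine (setIntegral_U j fun p => p.2 k).trans ?_
  rw [setIntegral_wedge_snd, Fintype.card_fin]

end SplitAt

theorem volume_setOf_apply_eq_zero {ι : Type*} [Fintype ι] (j : ι) :
    volume {x : EuclideanSpace ℝ ι | x j = 0} = 0 := by
  have h := (EuclideanSpace.volume_preserving_symm_measurableEquiv_toLp ι).measure_preimage
    (measurable_pi_apply j (measurableSet_singleton (0 : ℝ))).nullMeasurableSet
  exact h.trans (by rw [volume_pi]; exact Measure.pi_hyperplane _ j 0)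

section Pieces

variable {d : ℕ}

theorem C0_eq_preimage :
    C0 d = (MeasurableEquiv.toLp 2 (Fin d → ℝ)).symm ⁻¹' univ.pi fun _ => Icc 0 1 := by
  ext x; simp only [mem_preimage, mem_univ_pi]; rfl

theorem setIntegral_C0 (f : (Fin d → ℝ) → ℝ) :
    ∫ x in C0 d, f x.ofLp = ∫ y in univ.pi (fun _ => Icc (0 : ℝ) 1), f y := by
  rw [C0_eq_preimage]
  exact (EuclideanSpace.volume_preserving_symm_measurableEquiv_toLp _).setIntegral_preimage_emb
    (MeasurableEquiv.measurableEmbedding _) f _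

theorem setIntegral_C0_one : ∫ _ in C0 d, (1 : ℝ) = 1 := by
  rw [setIntegral_C0 fun _ => 1, setIntegral_const, volume_real_univ_pi_Icc zero_le_one]
  simp

theorem setIntegral_C0_apply (i : Fin d) : ∫ x in C0 d, x i = 1 / 2 := by
  rw [setIntegral_C0 fun y => y i, setIntegral_univ_pi_Icc_apply zero_le_one]
  simp

theorem isCompact_cube : IsCompact (cube d) := by
  have h : cube d = PiLp.homeomorph 2 (fun _ : Fin d => ℝ) ⁻¹' univ.pi fun _ => Icc (-1) 1 := by
    ext x; simp only [mem_preimage, mem_univ_pi]; rfl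
  rw [h, Homeomorph.isCompact_preimage]
  exact isCompact_univ_pi fun _ => isCompact_Icc

theorem isClosed_C0 : IsClosed (C0 d) := by
  simp only [C0, ofPred_forall]
  exact isClosed_iInter fun i => isClosed_Icc.preimage (PiLp.continuous_apply 2 _ i)

theorem isClosed_U (j : Fin d) : IsClosed (U d j) := by
  have hc (k : Fin d) : Continuous fun x : EuclideanSpace ℝ (Fin d) => x k := by fun_prop
  simp only [U, ofPred_and, ofPred_forall]
  exact (isClosed_le continuous_const (hc j)).inter ((isClosed_le (hc j) continuous_const).inter
    (isClosed_iInter fun k => isClosed_iInter fun _ =>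
      (isClosed_le (hc j).abs (hc k)).inter (isClosed_le (hc k) continuous_const)))

theorem C0_subset_cube : C0 d ⊆ cube d :=
  fun x hx i => ⟨by linarith [(hx i).1], (hx i).2⟩

theorem U_subset_cube (j : Fin d) : U d j ⊆ cube d := by
  rintro x ⟨hj₁, hj₂, hk⟩ i
  by_cases hij : i = j
  · subst hij; exact ⟨hj₁, by linarith⟩
  · exact ⟨by linarith [abs_nonneg (x j), (hk i hij).1], (hk i hij).2⟩

theorem isCompact_C0_union_U : IsCompact (C0 d ∪ ⋃ j, U d j) :=
  isCompact_cube.of_isClosed_subset (isClosed_C0.union (isClosed_iUnion_of_finite isClosed_U))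
    (union_subset C0_subset_cube (iUnion_subset U_subset_cube))

theorem setIntegral_C0_union_U {f : EuclideanSpace ℝ (Fin d) → ℝ} (hf : Continuous f) :
    ∫ x in C0 d ∪ ⋃ j, U d j, f x = (∫ x in C0 d, f x) + ∑ j, ∫ x in U d j, f x := by
  have hint := hf.continuousOn.integrableOn_compact (μ := volume) isCompact_C0_union_U
  have hC0U : AEDisjoint volume (C0 d) (⋃ j, U d j) := by
    rw [AEDisjoint, inter_iUnion]
    refine measure_iUnion_null fun j => measure_mono_null (fun x hx => ?_)
      (volume_setOf_apply_eq_zero j)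
    exact le_antisymm hx.2.2.1 (hx.1 j).1
  have hUU : Pairwise (Function.onFun (AEDisjoint volume) (U d)) := fun j k hjk =>
    measure_mono_null (fun x hx => show x j = 0 by
      linarith [hx.1.2.1, (hx.2.2.2 j hjk).1, abs_nonneg (x k)]) (volume_setOf_apply_eq_zero j)
  rw [setIntegral_union₀ hC0U
    (MeasurableSet.iUnion fun j => (isClosed_U j).measurableSet).nullMeasurableSet
    (hint.mono_set subset_union_left) (hint.mono_set subset_union_right),
    integral_iUnion_ae (fun j => (isClosed_U j).measurableSet.nullMeasurableSet) hUU
      (hint.mono_set subset_union_right), tsum_fintype]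

end Pieces

theorem volume_real_C0_union_U (n : ℕ) : volume.real (C0 (n + 1) ∪ ⋃ j, U (n + 1) j) = 2 := by
  have h := setIntegral_C0_union_U (d := n + 1) (continuous_const (y := (1 : ℝ)))
  rw [setIntegral_const, smul_eq_mul, mul_one, setIntegral_C0_one] at h
  simp only [setIntegral_U_one, Finset.sum_const, Finset.card_univ, Fintype.card_fin,
    nsmul_eq_mul] at h
  rw [h]
  push_cast
  field_simp
  ring

theorem setIntegral_C0_union_U_apply {n : ℕ} (i : Fin (n + 1)) :
    ∫ x in C0 (n + 1) ∪ ⋃ j, U (n + 1) j, x i =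
      1 / 2 + (1 / (n + 2) - 1 / (n + 1)) + n * (1 / (n + 1) - 1 / (2 * (n + 2))) := by
  rw [setIntegral_C0_union_U (PiLp.continuous_apply 2 _ i), setIntegral_C0_apply,
    Fintype.sum_eq_add_sum_compl i, setIntegral_U_apply_self,
    Finset.sum_congr rfl fun j hj => setIntegral_U_apply_of_ne (Ne.symm (by simpa using hj)),
    Finset.sum_const, Finset.card_compl, Finset.card_singleton, Fintype.card_fin,
    Nat.add_sub_cancel, nsmul_eq_mul, add_assoc]

theorem stmt7_general (d : ℕ) :
    ∀ i : Fin d,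
      (volume (C0 d ∪ ⋃ j, U d j)).toReal⁻¹ * ∫ x in C0 d ∪ ⋃ j, U d j, x i =
        1 / 2 - 1 / (d * (d + 1)) := by
  intro i
  obtain ⟨n, rfl⟩ := Nat.exists_eq_add_one_of_ne_zero i.pos.ne'
  rw [← measureReal_def, volume_real_C0_union_U, setIntegral_C0_union_U_apply]
  push_cast
  field_simp
  ring

theorem stmt7 (d : ℕ) (hd : 2 ≤ d) :
    ∀ i : Fin d,
      (volume (C0 d ∪ ⋃ j, U d j)).toReal⁻¹ * ∫ x in C0 d ∪ ⋃ j, U d j, x i =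
        1 / 2 - 1 / (d * (d + 1)) :=
  stmt7_general d
end

section
/- Let d ≥ 2, 0 < δ ≤ 1, and 0 ≤ r ≤ δ. Then C_d(D(d,δ), r) = (1/2)·C_{d,(2δ−1)·1, 2r}. -/
/-!
Two distinct points of the design differ in an even, hence nonzero, number `k ≥ 2` of
coordinates, so they are at distance `2δ√k > 2r` and the balls around them are disjoint.
Changing the signs of some coordinates is an isometry preserving the cube, so each ball meets
the cube in the same volume as the ball around `δ·1`. Since `r ≤ δ`, that ball lies in the
orthant `x ≥ 0`, so it meets the cube inside `[0,1]^d`; the map `x ↦ 2x - 1` carries `[0,1]^d`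
onto the cube and `B(δ·1, r)` onto `B((2δ-1)·1, 2r)`, multiplying volumes by `2^d`. Finally,
exactly half of the `2^d` sign vectors have an even number of `-1` entries.
-/

open MeasureTheory Filter

noncomputable section

open scoped symmDiff
open Finset Metric

theorem Finset.card_symmDiff_add_two_mul_card_inter {α : Type*} [DecidableEq α]
    (s t : Finset α) : #(s ∆ t) + 2 * #(s ∩ t) = #s + #t := by
  have h := card_union_of_disjoint (disjoint_sdiff_sdiff : Disjoint (s \ t) (t \ s))
  rw [← sup_eq_union, ← symmDiff_def] at h
  have hs := card_sdiff_add_card_inter s t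
  have ht := card_sdiff_add_card_inter t s
  rw [inter_comm t s] at ht
  omega

theorem Finset.even_card_symmDiff_iff {α : Type*} [DecidableEq α] (s t : Finset α) :
    Even #(s ∆ t) ↔ (Even #s ↔ Even #t) := by
  have h := card_symmDiff_add_two_mul_card_inter s t
  simp only [Nat.even_iff]
  omega

theorem Finset.two_mul_card_filter_even_card {α : Type*} [Fintype α] [DecidableEq α]
    [Nonempty α] : 2 * #{s : Finset α | Even #s} = 2 ^ Fintype.card α := by
  obtain ⟨a⟩ := ‹Nonempty α›
  have hflip (s : Finset α) : Even #(s ∆ {a}) ↔ ¬Even #s := by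
    rw [even_card_symmDiff_iff, card_singleton]
    simp
  have heven_odd : #{s : Finset α | Even #s} = #{s : Finset α | ¬Even #s} :=
    card_nbij' (· ∆ {a}) (· ∆ {a}) (fun s hs => by simp_all [-Nat.not_even_iff_odd])
      (fun s hs => by simp_all [-Nat.not_even_iff_odd])
      (fun s _ => symmDiff_symmDiff_cancel_right _ _)
      (fun s _ => symmDiff_symmDiff_cancel_right _ _)
  have htotal := card_filter_add_card_filter_not (s := (univ : Finset (Finset α)))
    (fun s => Even #s)
  rw [card_univ, Fintype.card_finset] at htotal
  omega

theorem isClosed_cube (d : ℕ) : IsClosed (cube d) := by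
  simp only [cube, Set.ofPred_forall]
  exact isClosed_iInter fun i => isClosed_Icc.preimage (by fun_prop)

/-- The point `δ·ε` of the design whose sign vector `ε` has its `-1` entries exactly on `A`. -/
def signPoint (d : ℕ) (δ : ℝ) (A : Finset (Fin d)) : EuclideanSpace ℝ (Fin d) :=
  WithLp.toLp 2 fun i => if i ∈ A then -δ else δ

theorem design_eq_image (d : ℕ) (δ : ℝ) :
    design d δ = signPoint d δ '' {A | Even #A} := by
  ext z
  constructor
  · rintro ⟨ε, hε, heven, hz⟩
    refine ⟨({i | ε i = -1} : Finset (Fin d)), ?_, ?_⟩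
    · rwa [Set.mem_ofPred_eq, ← Set.ncard_coe_finset, coe_filter_univ]
    · ext i
      rw [show z i = δ * ε i from congrFun hz i]
      rcases hε i with h | h <;> simp [signPoint, h]
      norm_num
  · rintro ⟨A, hA, rfl⟩
    refine ⟨fun i => if i ∈ A then -1 else 1, fun i => by by_cases h : i ∈ A <;> simp [h], ?_,
      by ext i; by_cases h : i ∈ A <;> simp [signPoint, h]⟩
    have hneg : {i | (if i ∈ A then (-1 : ℝ) else 1) = -1} = A := by
      ext i
      by_cases h : i ∈ A <;> simp [h]
      norm_num
    rwa [hneg, Set.ncard_coe_finset]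

theorem dist_signPoint_sq (d : ℕ) (δ : ℝ) (A B : Finset (Fin d)) :
    dist (signPoint d δ A) (signPoint d δ B) ^ 2 = #(A ∆ B) * (2 * δ) ^ 2 := by
  have hcoord (i : Fin d) : dist (signPoint d δ A i) (signPoint d δ B i) ^ 2 =
      if i ∈ A ∆ B then (2 * δ) ^ 2 else 0 := by
    rw [Real.dist_eq, sq_abs]
    by_cases hA : i ∈ A <;> by_cases hB : i ∈ B <;>
      simp [signPoint, hA, hB, mem_symmDiff] <;> ring
  rw [EuclideanSpace.dist_eq, Real.sq_sqrt (by positivity), sum_congr rfl fun i _ => hcoord i,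
    sum_ite_mem, univ_inter, sum_const, nsmul_eq_mul]

theorem disjoint_closedBall_signPoint {d : ℕ} {δ r : ℝ} (hδ : 0 < δ) (hr : r ≤ δ)
    {A B : Finset (Fin d)} (hA : Even #A) (hB : Even #B) (hAB : A ≠ B) :
    Disjoint (closedBall (signPoint d δ A) r) (closedBall (signPoint d δ B) r) := by
  have hcard : 2 ≤ #(A ∆ B) := by
    obtain ⟨k, hk⟩ := (even_card_symmDiff_iff A B).2 (iff_of_true hA hB)
    have : #(A ∆ B) ≠ 0 := by simpa [card_eq_zero] using hAB
    omega
  have hsq : (2 * δ) ^ 2 < dist (signPoint d δ A) (signPoint d δ B) ^ 2 := by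
    rw [dist_signPoint_sq]
    have : (2 : ℝ) ≤ #(A ∆ B) := by exact_mod_cast hcard
    nlinarith [pow_pos (mul_pos two_pos hδ) 2]
  apply closedBall_disjoint_closedBall
  linarith [lt_of_pow_lt_pow_left₀ 2 dist_nonneg hsq]

def signFlip (d : ℕ) (A : Finset (Fin d)) :
    EuclideanSpace ℝ (Fin d) ≃ₗᵢ[ℝ] EuclideanSpace ℝ (Fin d) :=
  LinearIsometryEquiv.piLpCongrRight 2 fun i =>
    if i ∈ A then LinearIsometryEquiv.neg ℝ else LinearIsometryEquiv.refl ℝ ℝ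

theorem signFlip_apply (d : ℕ) (A : Finset (Fin d)) (x : EuclideanSpace ℝ (Fin d)) (i : Fin d) :
    signFlip d A x i = if i ∈ A then -x i else x i := by
  by_cases h : i ∈ A <;> simp [signFlip, h]

theorem signFlip_symm (d : ℕ) (A : Finset (Fin d)) : (signFlip d A).symm = signFlip d A := by
  ext x i
  by_cases h : i ∈ A
  · simp [signFlip, h]
  · simp [signFlip, h]
    rfl

theorem preimage_signFlip_cube (d : ℕ) (A : Finset (Fin d)) :
    signFlip d A ⁻¹' cube d = cube d := by
  ext x
  simp only [cube, Set.mem_preimage, Set.mem_ofPred_eq, signFlip_apply]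
  refine forall_congr' fun i => ?_
  split_ifs
  · simp only [Set.mem_Icc]
    constructor <;> rintro ⟨h₁, h₂⟩ <;> constructor <;> linarith
  · rfl

theorem signFlip_signPoint (d : ℕ) (δ : ℝ) (A : Finset (Fin d)) :
    signFlip d A (signPoint d δ A) = const d δ := by
  ext i
  by_cases h : i ∈ A <;> simp [signFlip_apply, signPoint, const, h]

theorem volume_cube_inter_closedBall_signPoint (d : ℕ) (δ r : ℝ) (A : Finset (Fin d)) :
    volume (cube d ∩ closedBall (signPoint d δ A) r) =
      volume (cube d ∩ closedBall (const d δ) r) := by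
  have hpre : signFlip d A ⁻¹' (cube d ∩ closedBall (signPoint d δ A) r) =
      cube d ∩ closedBall (const d δ) r := by
    rw [Set.preimage_inter, preimage_signFlip_cube, LinearIsometryEquiv.preimage_closedBall,
      signFlip_symm, signFlip_signPoint]
  rw [← hpre, (signFlip d A).measurePreserving.measure_preimage
    ((isClosed_cube d).measurableSet.inter measurableSet_closedBall).nullMeasurableSet]

theorem cube_inter_closedBall_eq_C0_inter {d : ℕ} {z : EuclideanSpace ℝ (Fin d)} {r : ℝ}
    (hz : ∀ i, r ≤ z i) : cube d ∩ closedBall z r = C0 d ∩ closedBall z r := by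
  ext x
  simp only [cube, C0, Set.mem_inter_iff, Set.mem_ofPred_eq, Set.mem_Icc, mem_closedBall,
    and_congr_left_iff]
  intro hx
  refine forall_congr' fun i => and_congr_left fun _ => ⟨fun _ => ?_, fun h => by linarith⟩
  have hi := (Real.dist_eq _ _ ▸ PiLp.dist_apply_le x z i).trans hx
  linarith [neg_abs_le (x i - z i), hz i]

theorem volume_cube_inter_closedBall_two_smul_add (d : ℕ) (z : EuclideanSpace ℝ (Fin d))
    (r : ℝ) : volume (cube d ∩ closedBall ((2 : ℝ) • z + const d (-1)) (2 * r)) =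
      2 ^ d * volume (C0 d ∩ closedBall z r) := by
  set T := cube d ∩ closedBall ((2 : ℝ) • z + const d (-1)) (2 * r)
  have hpre : ((2 : ℝ) • ·) ⁻¹' ((· + const d (-1)) ⁻¹' T) = C0 d ∩ closedBall z r := by
    ext x
    simp only [T, Set.mem_preimage, Set.mem_inter_iff, mem_closedBall, dist_add_right,
      dist_smul₀, Real.norm_two, mul_le_mul_iff_right₀ two_pos (α := ℝ)]
    refine and_congr_left' (forall_congr' fun i => ?_)
    simp only [PiLp.add_apply, PiLp.smul_apply, smul_eq_mul, const, Set.mem_Icc]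
    constructor <;> rintro ⟨h₁, h₂⟩ <;> constructor <;> linarith
  rw [← hpre, Measure.addHaar_preimage_smul volume two_ne_zero, measure_preimage_add_right,
    finrank_euclideanSpace_fin, abs_of_pos (by positivity),
    ENNReal.ofReal_inv_of_pos (by positivity), ENNReal.ofReal_pow zero_le_two,
    ENNReal.ofReal_ofNat, ← mul_assoc, ENNReal.mul_inv_cancel (by simp) (by simp), one_mul]

theorem volume_cube_inter_closedBall_const_two_mul_sub_one (d : ℕ) {δ r : ℝ} (hr : r ≤ δ) :
    volume (cube d ∩ closedBall (const d (2 * δ - 1)) (2 * r)) =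
      2 ^ d * volume (cube d ∩ closedBall (const d δ) r) := by
  have hcentre : const d (2 * δ - 1) = (2 : ℝ) • const d δ + const d (-1) := by
    ext i
    simp only [const, PiLp.add_apply, PiLp.smul_apply, smul_eq_mul]
    ring
  rw [hcentre, volume_cube_inter_closedBall_two_smul_add,
    cube_inter_closedBall_eq_C0_inter fun _ => hr]

theorem volume_cube_inter_biUnion_closedBall_signPoint {d : ℕ} {δ r : ℝ} (hδ : 0 < δ)
    (hr : r ≤ δ) (S : Finset (Finset (Fin d))) (hS : ∀ A ∈ S, Even #A) :
    volume (cube d ∩ ⋃ A ∈ S, closedBall (signPoint d δ A) r) =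
      #S * volume (cube d ∩ closedBall (const d δ) r) := by
  rw [Set.inter_iUnion₂, measure_biUnion_finset, sum_congr rfl fun A _ =>
    volume_cube_inter_closedBall_signPoint d δ r A, sum_const, nsmul_eq_mul]
  · intro A hA B hB hAB
    exact (disjoint_closedBall_signPoint hδ hr (hS A hA) (hS B hB) hAB).mono
      Set.inter_subset_right Set.inter_subset_right
  · exact fun A _ => (isClosed_cube d).measurableSet.inter measurableSet_closedBall

theorem stmt9_general (d : ℕ) (hd : 2 ≤ d) (δ r : ℝ) (hδ0 : 0 < δ) (hr1 : r ≤ δ) :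
    cover d (design d δ) r = (1 / 2) * coverOne d (const d (2 * δ - 1)) (2 * r) := by
  have : Nonempty (Fin d) := ⟨⟨0, by omega⟩⟩
  have hcount : (#{A : Finset (Fin d) | Even #A} : ℝ) = 2 ^ d / 2 := by
    rw [eq_div_iff two_ne_zero, mul_comm]
    exact_mod_cast (Fintype.card_fin d ▸ two_mul_card_filter_even_card)
  have hdesign : ⋃ z ∈ design d δ, closedBall z r =
      ⋃ A ∈ ({A | Even #A} : Finset (Finset (Fin d))), closedBall (signPoint d δ A) r := by
    rw [design_eq_image, Set.biUnion_image]
    simp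
  rw [cover, coverOne, hdesign,
    volume_cube_inter_biUnion_closedBall_signPoint hδ0 hr1 _ (by simp),
    volume_cube_inter_closedBall_const_two_mul_sub_one d hr1, ENNReal.toReal_mul,
    ENNReal.toReal_mul, ENNReal.toReal_natCast, ENNReal.toReal_pow, ENNReal.toReal_ofNat, hcount]
  field_simp

theorem stmt9 (d : ℕ) (hd : 2 ≤ d) (δ r : ℝ) (hδ0 : 0 < δ) (hδ1 : δ ≤ 1)
    (hr0 : 0 ≤ r) (hr1 : r ≤ δ) :
    cover d (design d δ) r = (1 / 2) * coverOne d (const d (2 * δ - 1)) (2 * r) :=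
  stmt9_general d hd δ r hδ0 hr1

end
end

section
/- Let d ≥ 2, 0 < δ < 1 and r ≥ 0. Then (1/2)·[ C_{d,(2δ−1)·1, 2r} + C_{d,A, 2r} ] ≤ C_d(D(d,δ), r) ≤ C_{d,(2δ−1)·1, 2r}, where A = (2δ+1, 2δ−1, 2δ−1, …, 2δ−1) ∈ ℝ^d. -/
/-!
The fold `x ↦ (2|x_i| - 1)_i` maps the cube onto itself preserving volume, and
`‖fold x - (2δ-1)·1‖ ≤ 2‖x - z‖` for every design point `z`: this is the upper bound.
Conversely, if `x` has an even number of negative coordinates, i.e. `∏ x_i > 0`, then `δ·sign x`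
is a design point at distance `‖fold x - (2δ-1)·1‖ / 2` from `x`; if the number is odd, then with
`σ` the negation of the first coordinate, `δ·sign (σ x)` is a design point at distance
`‖σ (fold x) - A‖ / 2`. Since `σ` preserves volume, commutes with the fold and exchanges the two
parity classes, each class carries exactly half the volume of `cube ∩ fold⁻¹ S` for every `S`,
which gives the lower bound.
-/

open MeasureTheory Filter

noncomputable section

open Set

theorem map_volume_restrict_affine {a : ℝ} (ha : a ≠ 0) (b : ℝ) {s t : Set ℝ}
    (ht : MeasurableSet t) (hs : (fun u => a * u + b) ⁻¹' t = s) :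
    (volume.restrict s).map (fun u => a * u + b) = ENNReal.ofReal |a⁻¹| • volume.restrict t := by
  have hmap : volume.map (fun u : ℝ => a * u + b) = ENNReal.ofReal |a⁻¹| • volume := by
    change volume.map ((· + b) ∘ (a * ·)) = _
    rw [← Measure.map_map (measurable_add_const b) (measurable_const_mul a),
      Real.map_volume_mul_left ha, Measure.map_smul, (measurePreserving_add_right volume b).map_eq]
  rw [← hs, ← Measure.restrict_map (by fun_prop) ht, hmap, Measure.restrict_smul]

theorem measurePreserving_two_mul_abs_sub_one :
    MeasurePreserving (fun t : ℝ => 2 * |t| - 1)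
      (volume.restrict (Icc (-1) 1)) (volume.restrict (Icc (-1) 1)) := by
  refine ⟨by fun_prop, ?_⟩
  have hsplit : volume.restrict (Icc (-1 : ℝ) 1)
      = volume.restrict (Icc (-1) 0) + volume.restrict (Ioc 0 1) := by
    rw [← Measure.restrict_union ((Iic_disjoint_Ioc le_rfl).mono_left Icc_subset_Iic_self)
      measurableSet_Ioc, Icc_union_Ioc_eq_Icc (by norm_num) (by norm_num)]
  have hneg : (volume.restrict (Icc (-1 : ℝ) 0)).map (fun t => 2 * |t| - 1)
      = ENNReal.ofReal 2⁻¹ • volume.restrict (Icc (-1) 1) := by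
    rw [Measure.map_congr (g := fun t => -2 * t + -1)
      ((ae_restrict_mem measurableSet_Icc).mono fun t ht => by
        simp only [abs_of_nonpos ht.2]; ring)]
    convert map_volume_restrict_affine (by norm_num : (-2 : ℝ) ≠ 0) (-1) measurableSet_Icc _
      using 3
    · norm_num [abs_of_pos]
    · ext t
      simp only [mem_preimage, mem_Icc]
      constructor <;> intro h <;> constructor <;> linarith [h.1, h.2]
  have hpos : (volume.restrict (Ioc (0 : ℝ) 1)).map (fun t => 2 * |t| - 1)
      = ENNReal.ofReal 2⁻¹ • volume.restrict (Icc (-1) 1) := by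
    rw [Measure.map_congr (g := fun t => 2 * t + -1)
      ((ae_restrict_mem measurableSet_Ioc).mono fun t ht => by
        simp only [abs_of_pos ht.1]; ring), Measure.restrict_congr_set Ioc_ae_eq_Icc]
    convert map_volume_restrict_affine (by norm_num : (2 : ℝ) ≠ 0) (-1) measurableSet_Icc _
      using 3
    · norm_num [abs_of_pos]
    · ext t
      simp only [mem_preimage, mem_Icc]
      constructor <;> intro h <;> constructor <;> linarith [h.1, h.2]
  rw [hsplit, Measure.map_add _ _ (by fun_prop), hneg, hpos, ← add_smul, ← hsplit,
    ← ENNReal.ofReal_add (by norm_num) (by norm_num)]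
  norm_num

theorem cube_eq_preimage_pi (d : ℕ) :
    cube d = WithLp.ofLp ⁻¹' univ.pi fun _ => Icc (-1 : ℝ) 1 := by
  ext x
  simp only [cube, mem_preimage, mem_univ_pi]
  rfl

theorem measurableSet_cube (d : ℕ) : MeasurableSet (cube d) := by
  rw [cube_eq_preimage_pi]
  exact (MeasurableSet.univ_pi fun _ => measurableSet_Icc).preimage (by fun_prop)

theorem volume_cube (d : ℕ) : volume (cube d) = 2 ^ d := by
  rw [cube_eq_preimage_pi, (PiLp.volume_preserving_ofLp (Fin d)).measure_preimage
    (MeasurableSet.univ_pi fun _ => measurableSet_Icc).nullMeasurableSet, volume_pi_pi]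
  norm_num [Real.volume_Icc]

def cubeFold (d : ℕ) (x : EuclideanSpace ℝ (Fin d)) : EuclideanSpace ℝ (Fin d) :=
  WithLp.toLp 2 fun i => 2 * |x i| - 1

theorem cubeFold_apply {d : ℕ} (x : EuclideanSpace ℝ (Fin d)) (i : Fin d) :
    cubeFold d x i = 2 * |x i| - 1 := rfl

theorem measurePreserving_cubeFold (d : ℕ) :
    MeasurePreserving (cubeFold d) (volume.restrict (cube d)) (volume.restrict (cube d)) := by
  have hbox : MeasurableSet (univ.pi fun _ : Fin d => Icc (-1 : ℝ) 1) :=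
    MeasurableSet.univ_pi fun _ => measurableSet_Icc
  have hofLp := (PiLp.volume_preserving_ofLp (Fin d)).restrict_preimage hbox
  have htoLp := (PiLp.volume_preserving_toLp (Fin d)).restrict_preimage (measurableSet_cube d)
  have hfold : MeasurePreserving (fun (x : Fin d → ℝ) i => 2 * |x i| - 1)
      (volume.restrict (univ.pi fun _ => Icc (-1 : ℝ) 1))
      (volume.restrict (univ.pi fun _ => Icc (-1 : ℝ) 1)) := by
    rw [volume_pi, Measure.restrict_pi_pi]
    exact measurePreserving_pi _ _ fun _ => measurePreserving_two_mul_abs_sub_one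
  rw [← cube_eq_preimage_pi] at hofLp
  rw [show WithLp.toLp 2 ⁻¹' cube d = univ.pi fun _ => Icc (-1 : ℝ) 1 by
    rw [cube_eq_preimage_pi]; rfl] at htoLp
  exact htoLp.comp (hfold.comp hofLp)

theorem volume_cube_inter_cubeFold_preimage (d : ℕ) {S : Set (EuclideanSpace ℝ (Fin d))}
    (hS : MeasurableSet S) : volume (cube d ∩ cubeFold d ⁻¹' S) = volume (cube d ∩ S) := by
  rw [inter_comm, ← Measure.restrict_apply ((measurePreserving_cubeFold d).measurable hS),
    (measurePreserving_cubeFold d).measure_preimage hS.nullMeasurableSet,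
    Measure.restrict_apply hS, inter_comm]

section Orthants

variable {ι : Type*} [Fintype ι]

theorem measurableSet_prod_neg : MeasurableSet {x : EuclideanSpace ℝ ι | ∏ i, x i < 0} :=
  measurableSet_lt (by fun_prop) measurable_const

theorem volume_setOf_prod_eq_zero : volume {x : EuclideanSpace ℝ ι | ∏ i, x i = 0} = 0 := by
  classical
  have hcoord : ∀ i, volume {x : EuclideanSpace ℝ ι | x i = 0} = 0 := fun i => by
    let π : EuclideanSpace ℝ ι →ₗ[ℝ] ℝ := (EuclideanSpace.proj (𝕜 := ℝ) i).toLinearMap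
    refine Measure.addHaar_submodule volume (LinearMap.ker π) fun h => ?_
    have : EuclideanSpace.single i (1 : ℝ) ∈ LinearMap.ker π := h ▸ Submodule.mem_top
    simp [π] at this
  have : {x : EuclideanSpace ℝ ι | ∏ i, x i = 0} = ⋃ i, {x | x i = 0} := by
    ext x
    simp [Finset.prod_eq_zero_iff]
  rw [this]
  exact measure_iUnion_null hcoord

theorem volume_inter_prod_pos_add_volume_inter_prod_neg {T : Set (EuclideanSpace ℝ ι)}
    (hT : MeasurableSet T) :
    volume (T ∩ {x | 0 < ∏ i, x i}) + volume (T ∩ {x | ∏ i, x i < 0}) = volume T := by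
  have hsplit : T ∩ {x | 0 < ∏ i, x i} ∪ T ∩ {x | ∏ i, x i < 0} = T \ {x | ∏ i, x i = 0} := by
    ext x
    rcases lt_trichotomy (∏ i, x i) 0 with h | h | h
    · simp [h, h.ne, h.not_gt]
    · simp [h]
    · simp [h, h.ne', h.not_gt]
  have hdisj : Disjoint (T ∩ {x | 0 < ∏ i, x i}) (T ∩ {x | ∏ i, x i < 0}) :=
    disjoint_left.2 fun _ ⟨_, h⟩ ⟨_, h'⟩ => lt_asymm (α := ℝ) h h'
  rw [← measure_union hdisj (hT.inter measurableSet_prod_neg), hsplit,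
    measure_sdiff_null volume_setOf_prod_eq_zero]

theorem prod_eq_neg_one_pow_mul_prod_abs (x : EuclideanSpace ℝ ι) :
    ∏ i, x i = (-1) ^ {i | x i < 0}.ncard * ∏ i, |x i| := by
  have hx : ∀ i, x i = (if x i < 0 then -1 else 1) * |x i| := fun i => by
    split_ifs with h
    · rw [abs_of_neg h]; ring
    · rw [abs_of_nonneg (not_lt.1 h), one_mul]
  rw [Finset.prod_congr rfl fun i _ => hx i, Finset.prod_mul_distrib, Finset.prod_ite,
    Finset.prod_const, Finset.prod_const_one, mul_one, ← Set.ncard_coe_finset,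
    Finset.coe_filter]
  simp

end Orthants

section NegCoord

variable {ι : Type*} [Fintype ι] [DecidableEq ι]

def negCoord (j : ι) : EuclideanSpace ℝ ι ≃ₗᵢ[ℝ] EuclideanSpace ℝ ι :=
  LinearIsometryEquiv.piLpCongrRight 2 fun i =>
    if i = j then LinearIsometryEquiv.neg ℝ else LinearIsometryEquiv.refl ℝ ℝ

theorem negCoord_apply (j : ι) (x : EuclideanSpace ℝ ι) (i : ι) :
    negCoord j x i = if i = j then -x i else x i := by
  by_cases h : i = j <;> simp [negCoord, h]

theorem prod_negCoord (j : ι) (x : EuclideanSpace ℝ ι) :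
    ∏ i, negCoord j x i = -∏ i, x i := by
  simp only [negCoord_apply]
  rw [← Finset.mul_prod_erase _ _ (Finset.mem_univ j),
    ← Finset.mul_prod_erase _ _ (Finset.mem_univ j), if_pos rfl, neg_mul]
  congr 2
  exact Finset.prod_congr rfl fun i hi => if_neg (Finset.ne_of_mem_erase hi)

theorem volume_inter_prod_neg_eq_pos (j : ι) {T : Set (EuclideanSpace ℝ ι)}
    (hT : negCoord j ⁻¹' T = T) (hTm : MeasurableSet T) :
    volume (T ∩ {x | ∏ i, x i < 0}) = volume (T ∩ {x | 0 < ∏ i, x i}) := by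
  rw [← (negCoord j).measurePreserving.measure_preimage
    (hTm.inter measurableSet_prod_neg).nullMeasurableSet, preimage_inter, hT]
  congr 1
  ext x
  simp [prod_negCoord]

theorem two_mul_volume_inter_prod_pos (j : ι) {T : Set (EuclideanSpace ℝ ι)}
    (hT : negCoord j ⁻¹' T = T) (hTm : MeasurableSet T) :
    2 * volume (T ∩ {x | 0 < ∏ i, x i}) = volume T := by
  rw [two_mul]
  nth_rw 2 [← volume_inter_prod_neg_eq_pos j hT hTm]
  exact volume_inter_prod_pos_add_volume_inter_prod_neg hTm

theorem two_mul_volume_inter_prod_neg (j : ι) {T : Set (EuclideanSpace ℝ ι)}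
    (hT : negCoord j ⁻¹' T = T) (hTm : MeasurableSet T) :
    2 * volume (T ∩ {x | ∏ i, x i < 0}) = volume T := by
  rw [two_mul]
  nth_rw 1 [volume_inter_prod_neg_eq_pos j hT hTm]
  exact volume_inter_prod_pos_add_volume_inter_prod_neg hTm

end NegCoord

theorem negCoord_preimage_cube {d : ℕ} (j : Fin d) : negCoord j ⁻¹' cube d = cube d := by
  ext x
  refine forall_congr' fun i => ?_
  rw [negCoord_apply]
  split_ifs
  · simp only [mem_Icc, neg_le, neg_neg, le_neg]
    exact and_comm
  · rfl

theorem cubeFold_negCoord {d : ℕ} (j : Fin d) (x : EuclideanSpace ℝ (Fin d)) :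
    cubeFold d (negCoord j x) = cubeFold d x := by
  ext i
  simp only [cubeFold, negCoord_apply]
  split_ifs <;> simp

theorem negCoord_preimage_cube_inter_cubeFold_preimage {d : ℕ} (j : Fin d)
    (S : Set (EuclideanSpace ℝ (Fin d))) :
    negCoord j ⁻¹' (cube d ∩ cubeFold d ⁻¹' S) = cube d ∩ cubeFold d ⁻¹' S := by
  ext x
  simp only [preimage_inter, mem_inter_iff, mem_preimage, cubeFold_negCoord, negCoord_preimage_cube]

def signPattern {ι : Type*} (x : EuclideanSpace ℝ ι) : ι → ℝ :=
  fun i => if x i < 0 then -1 else 1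

theorem toLp_mul_signPattern_mem_design {d : ℕ} (δ : ℝ) {y : EuclideanSpace ℝ (Fin d)}
    (hy : 0 < ∏ i, y i) : WithLp.toLp 2 (fun i => δ * signPattern y i) ∈ design d δ := by
  refine ⟨signPattern y, fun i => ?_, ?_, rfl⟩
  · unfold signPattern
    split_ifs <;> simp
  · have hneg : {i | signPattern y i = -1} = {i | y i < 0} := by
      ext i
      simp only [signPattern, mem_ofPred_eq]
      split_ifs with h <;> norm_num [h]
    rw [hneg]
    rcases Nat.even_or_odd {i | y i < 0}.ncard with h | h
    · exact h
    · rw [prod_eq_neg_one_pow_mul_prod_abs, h.neg_one_pow] at hy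
      linarith [Finset.prod_nonneg fun i (_ : i ∈ Finset.univ) => abs_nonneg (y i)]

theorem EuclideanSpace.dist_le_mul_of_forall_dist_le {ι : Type*} [Fintype ι]
    {x y u v : EuclideanSpace ℝ ι} {c : ℝ} (hc : 0 ≤ c)
    (h : ∀ i, dist (x i) (y i) ≤ c * dist (u i) (v i)) : dist x y ≤ c * dist u v := by
  rw [EuclideanSpace.dist_eq, EuclideanSpace.dist_eq, ← Real.sqrt_sq hc,
    ← Real.sqrt_mul (sq_nonneg c), Finset.mul_sum]
  gcongr with i
  rw [← mul_pow]
  exact pow_le_pow_left₀ dist_nonneg (h i) 2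

theorem dist_two_mul_abs_sub_one (t δ : ℝ) :
    dist (2 * |t| - 1) (2 * δ - 1) = 2 * |(|t|) - δ| := by
  rw [Real.dist_eq, show 2 * |t| - 1 - (2 * δ - 1) = 2 * (|t| - δ) by ring, abs_mul, abs_two]

theorem dist_cubeFold_const_le {d : ℕ} {δ : ℝ} (hδ : 0 ≤ δ) (x : EuclideanSpace ℝ (Fin d))
    {z : EuclideanSpace ℝ (Fin d)} (hz : z ∈ design d δ) :
    dist (cubeFold d x) (const d (2 * δ - 1)) ≤ 2 * dist x z := by
  obtain ⟨ε, hε, -, hz⟩ := hz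
  refine EuclideanSpace.dist_le_mul_of_forall_dist_le zero_le_two fun i => ?_
  have hδε : |δ * ε i| = δ := by rcases hε i with h | h <;> simp [h, abs_of_nonneg hδ]
  rw [cubeFold_apply, const, PiLp.toLp_apply, dist_two_mul_abs_sub_one, hz, Real.dist_eq]
  exact mul_le_mul_of_nonneg_left
    (by simpa [hδε] using abs_abs_sub_abs_le_abs_sub (x i) (δ * ε i)) zero_le_two

theorem dist_mul_sign_eq (t δ : ℝ) :
    dist t (δ * if t < 0 then -1 else 1) = 2⁻¹ * dist (2 * |t| - 1) (2 * δ - 1) := by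
  rw [dist_two_mul_abs_sub_one, Real.dist_eq, ← mul_assoc, inv_mul_cancel₀ two_ne_zero, one_mul]
  split_ifs with h
  · rw [abs_of_neg h, ← abs_neg]; ring_nf
  · rw [abs_of_nonneg (not_lt.1 h)]; ring_nf

theorem dist_mul_neg_sign_eq {δ : ℝ} (hδ : 0 ≤ δ) (t : ℝ) :
    dist t (δ * if -t < 0 then -1 else 1) = 2⁻¹ * dist (-(2 * |t| - 1)) (2 * δ + 1) := by
  rw [Real.dist_eq, Real.dist_eq, show -(2 * |t| - 1) - (2 * δ + 1) = -(2 * (|t| + δ)) by ring,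
    abs_neg, abs_of_nonneg (a := 2 * (|t| + δ)) (by positivity), ← mul_assoc,
    inv_mul_cancel₀ two_ne_zero, one_mul]
  split_ifs with h
  · rw [abs_of_pos (neg_lt_zero.1 h), abs_of_nonneg (by linarith)]; ring
  · rw [abs_of_nonpos (by linarith), abs_of_nonpos (by linarith)]; ring

theorem dist_toLp_mul_signPattern_le {d : ℕ} (δ : ℝ) (x : EuclideanSpace ℝ (Fin d)) :
    dist x (WithLp.toLp 2 fun i => δ * signPattern x i)
      ≤ 2⁻¹ * dist (cubeFold d x) (const d (2 * δ - 1)) :=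
  EuclideanSpace.dist_le_mul_of_forall_dist_le (by norm_num) fun i =>
    (dist_mul_sign_eq (x i) δ).le

theorem dist_toLp_mul_signPattern_negCoord_le {d : ℕ} {δ : ℝ} (hδ : 0 ≤ δ) (j : Fin d)
    (x : EuclideanSpace ℝ (Fin d)) :
    dist x (WithLp.toLp 2 fun i => δ * signPattern (negCoord j x) i)
      ≤ 2⁻¹ * dist (negCoord j (cubeFold d x))
        (WithLp.toLp 2 fun i => if i = j then 2 * δ + 1 else 2 * δ - 1) := by
  refine EuclideanSpace.dist_le_mul_of_forall_dist_le (by norm_num) fun i => le_of_eq ?_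
  by_cases hij : i = j
  · subst hij
    simpa [signPattern, negCoord_apply, cubeFold_apply] using dist_mul_neg_sign_eq hδ (x i)
  · simpa [signPattern, negCoord_apply, cubeFold_apply, hij] using dist_mul_sign_eq (x i) δ

theorem volume_cube_inter_negCoord_preimage {d : ℕ} (j : Fin d)
    {S : Set (EuclideanSpace ℝ (Fin d))} (hS : MeasurableSet S) :
    volume (cube d ∩ negCoord j ⁻¹' S) = volume (cube d ∩ S) := by
  nth_rw 1 [← negCoord_preimage_cube j]
  rw [← preimage_inter, (negCoord j).measurePreserving.measure_preimage
    ((measurableSet_cube d).inter hS).nullMeasurableSet]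

section Covering

open Metric

variable {d : ℕ} {δ : ℝ}

theorem cube_inter_biUnion_design_subset (hδ : 0 ≤ δ) (r : ℝ) :
    cube d ∩ ⋃ z ∈ design d δ, closedBall z r
      ⊆ cube d ∩ cubeFold d ⁻¹' closedBall (const d (2 * δ - 1)) (2 * r) := by
  rintro x ⟨hx, hxW⟩
  obtain ⟨z, hz, hxz⟩ := mem_iUnion₂.1 hxW
  refine ⟨hx, ?_⟩
  rw [mem_preimage, mem_closedBall]
  linarith [dist_cubeFold_const_le hδ x hz, mem_closedBall.1 hxz]

theorem cube_inter_cubeFold_preimage_inter_prod_pos_subset (r : ℝ) :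
    cube d ∩ cubeFold d ⁻¹' closedBall (const d (2 * δ - 1)) (2 * r) ∩ {x | 0 < ∏ i, x i}
      ⊆ cube d ∩ ⋃ z ∈ design d δ, closedBall z r := by
  rintro x ⟨⟨hx, hball⟩, hprod⟩
  rw [mem_preimage, mem_closedBall] at hball
  refine ⟨hx, mem_iUnion₂.2 ⟨_, toLp_mul_signPattern_mem_design δ hprod, ?_⟩⟩
  rw [mem_closedBall]
  linarith [dist_toLp_mul_signPattern_le δ x]

theorem cube_inter_cubeFold_preimage_inter_prod_neg_subset (hδ : 0 ≤ δ) (j : Fin d) (r : ℝ) :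
    cube d ∩ cubeFold d ⁻¹' (negCoord j ⁻¹'
        closedBall (WithLp.toLp 2 fun i => if i = j then 2 * δ + 1 else 2 * δ - 1) (2 * r))
      ∩ {x | ∏ i, x i < 0}
      ⊆ cube d ∩ ⋃ z ∈ design d δ, closedBall z r := by
  rintro x ⟨⟨hx, hball⟩, hprod⟩
  have hprod' : 0 < ∏ i, negCoord j x i := by
    rw [prod_negCoord]
    exact neg_pos.2 hprod
  rw [mem_preimage, mem_preimage, mem_closedBall] at hball
  refine ⟨hx, mem_iUnion₂.2 ⟨_, toLp_mul_signPattern_mem_design δ hprod', ?_⟩⟩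
  rw [mem_closedBall]
  linarith [dist_toLp_mul_signPattern_negCoord_le hδ j x]

theorem volume_cube_inter_biUnion_design_le (hδ : 0 ≤ δ) (r : ℝ) :
    volume (cube d ∩ ⋃ z ∈ design d δ, closedBall z r)
      ≤ volume (cube d ∩ closedBall (const d (2 * δ - 1)) (2 * r)) :=
  (measure_mono (cube_inter_biUnion_design_subset hδ r)).trans_eq
    (volume_cube_inter_cubeFold_preimage d measurableSet_closedBall)

theorem volume_add_volume_le_two_mul_volume_cube_inter_biUnion_design (hδ : 0 ≤ δ) (j : Fin d)
    (r : ℝ) :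
    volume (cube d ∩ closedBall (const d (2 * δ - 1)) (2 * r))
        + volume (cube d ∩
            closedBall (WithLp.toLp 2 fun i => if i = j then 2 * δ + 1 else 2 * δ - 1) (2 * r))
      ≤ 2 * volume (cube d ∩ ⋃ z ∈ design d δ, closedBall z r) := by
  set A : EuclideanSpace ℝ (Fin d) :=
    WithLp.toLp 2 fun i => if i = j then 2 * δ + 1 else 2 * δ - 1
  have hfold := (measurePreserving_cubeFold d).measurable
  have hB : MeasurableSet (negCoord j ⁻¹' closedBall A (2 * r)) :=
    (negCoord j).continuous.measurable measurableSet_closedBall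
  have hT₁ : MeasurableSet (cube d ∩ cubeFold d ⁻¹' closedBall (const d (2 * δ - 1)) (2 * r)) :=
    (measurableSet_cube d).inter (hfold measurableSet_closedBall)
  have hT₂ : MeasurableSet (cube d ∩ cubeFold d ⁻¹' (negCoord j ⁻¹' closedBall A (2 * r))) :=
    (measurableSet_cube d).inter (hfold hB)
  have hdisj : Disjoint
      (cube d ∩ cubeFold d ⁻¹' closedBall (const d (2 * δ - 1)) (2 * r) ∩ {x | 0 < ∏ i, x i})
      (cube d ∩ cubeFold d ⁻¹' (negCoord j ⁻¹' closedBall A (2 * r)) ∩ {x | ∏ i, x i < 0}) :=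
    disjoint_left.2 fun _ ⟨_, h⟩ ⟨_, h'⟩ => lt_asymm (α := ℝ) h h'
  rw [← volume_cube_inter_cubeFold_preimage d measurableSet_closedBall,
    ← volume_cube_inter_negCoord_preimage j measurableSet_closedBall,
    ← volume_cube_inter_cubeFold_preimage d hB,
    ← two_mul_volume_inter_prod_pos j (negCoord_preimage_cube_inter_cubeFold_preimage j _) hT₁,
    ← two_mul_volume_inter_prod_neg j (negCoord_preimage_cube_inter_cubeFold_preimage j _) hT₂,
    ← mul_add, ← measure_union hdisj (hT₂.inter measurableSet_prod_neg)]
  gcongr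
  exact union_subset (cube_inter_cubeFold_preimage_inter_prod_pos_subset r)
    (cube_inter_cubeFold_preimage_inter_prod_neg_subset hδ j r)

end Covering

theorem stmt12_general (d : ℕ) (hd : 2 ≤ d) (δ r : ℝ) (hδ0 : 0 < δ) :
    (1 / 2) *
        (coverOne d (const d (2 * δ - 1)) (2 * r) +
          coverOne d
            (WithLp.toLp 2 (fun i : Fin d => if (i : ℕ) = 0 then 2 * δ + 1 else 2 * δ - 1) :
              EuclideanSpace ℝ (Fin d)) (2 * r)) ≤
        cover d (design d δ) r ∧
      cover d (design d δ) r ≤ coverOne d (const d (2 * δ - 1)) (2 * r) := by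
  set j₀ : Fin d := ⟨0, by omega⟩
  have hA : (WithLp.toLp 2 (fun i : Fin d => if (i : ℕ) = 0 then 2 * δ + 1 else 2 * δ - 1) :
      EuclideanSpace ℝ (Fin d))
        = WithLp.toLp 2 fun i => if i = j₀ then 2 * δ + 1 else 2 * δ - 1 := by
    simp [j₀, Fin.ext_iff]
  have hfin : ∀ S, volume (cube d ∩ S) ≠ ⊤ := fun S =>
    ((measure_mono inter_subset_left).trans_lt (by simp [volume_cube])).ne
  have hlow := volume_add_volume_le_two_mul_volume_cube_inter_biUnion_design hδ0.le j₀ r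
  have hup := volume_cube_inter_biUnion_design_le (d := d) hδ0.le r
  rw [← hA] at hlow
  unfold cover coverOne
  constructor
  · rw [← add_div, ← mul_div_assoc, ← ENNReal.toReal_add (hfin _) (hfin _)]
    refine div_le_div_of_nonneg_right ?_ (by positivity)
    have := ENNReal.toReal_mono (ENNReal.mul_ne_top ENNReal.ofNat_ne_top (hfin _)) hlow
    rw [ENNReal.toReal_mul, ENNReal.toReal_ofNat] at this
    linarith
  · exact div_le_div_of_nonneg_right (ENNReal.toReal_mono (hfin _) hup) (by positivity)

theorem stmt12 (d : ℕ) (hd : 2 ≤ d) (δ r : ℝ) (hδ0 : 0 < δ) (hδ1 : δ < 1) (hr : 0 ≤ r) :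
    (1 / 2) *
        (coverOne d (const d (2 * δ - 1)) (2 * r) +
          coverOne d
            (WithLp.toLp 2 (fun i : Fin d => if (i : ℕ) = 0 then 2 * δ + 1 else 2 * δ - 1) :
              EuclideanSpace ℝ (Fin d)) (2 * r)) ≤
        cover d (design d δ) r ∧
      cover d (design d δ) r ≤ coverOne d (const d (2 * δ - 1)) (2 * r) :=
  stmt12_general d hd δ r hδ0
end
end

section
/- Fix γ with 0 < γ < 1 and fix 0 < δ ≤ 1. For each integer d ≥ 2 let r_{1−γ}(d) = inf{ r ≥ 0 : C_d(D(d,δ), r) ≥ 1 − γ } and let R_{1−γ}(d) = 2^{(d−1)/d}·r_{1−γ}(d)/(2√d) be the normalised covering radius. Then lim_{d→∞} R_{1−γ}(d) exists and equals √(1/3 + (2δ−1)²)/2; in particular, over δ ∈ (0,1] this limit is minimal exactly at δ = 1/2, where it equals 1/(2√3). -/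
open MeasureTheory Filter

noncomputable section

/-- The `(1-γ)`-covering radius of the design `D(d,δ)`. -/
def rcov (d : ℕ) (δ γ : ℝ) : ℝ :=
  sInf {r : ℝ | 0 ≤ r ∧ 1 - γ ≤ cover d (design d δ) r}

/-!
Under the uniform distribution on the cube, `g(x) = ∑ᵢ (|xᵢ| - δ)²` is the squared distance from
`x` to the nearest of all `2^d` points `δ • ε`, `ε ∈ {±1}^d`; the nearest point with an even
number of `-1`s is at squared distance at most `g(x) + 4δ` (flip one sign). The summands of `g`
are i.i.d. with mean `m = (1/3 + (2δ - 1)²)/4`, so by Chebyshev's inequality `g(x)/d → m` in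
probability. Hence the fraction of the cube covered at radius `√(a d)` tends to `0` for `a < m`
and to `1` for `a > m`, which forces `rcov d δ γ ^ 2 / d → m` whatever `γ ∈ (0, 1)` is.
-/

open ProbabilityTheory Set Topology

section CoveringRadius

lemma prod_eq_neg_one_pow_ncard {ι : Type*} [Fintype ι] {ε : ι → ℝ}
    (hε : ∀ i, ε i = 1 ∨ ε i = -1) : ∏ i, ε i = (-1) ^ {i | ε i = -1}.ncard := by
  classical
  calc ∏ i, ε i = ∏ i, if ε i = -1 then -1 else 1 :=
        Finset.prod_congr rfl fun i _ => by rcases hε i with h | h <;> simp [h]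
    _ = _ := by simp [Finset.prod_ite, Set.ncard_eq_toFinset_card']

lemma exists_even_signs_eq_of_ne {ι : Type*} [Fintype ι] [DecidableEq ι] {σ : ι → ℝ}
    (hσ : ∀ i, σ i = 1 ∨ σ i = -1) (j : ι) :
    ∃ ε : ι → ℝ, (∀ i, ε i = 1 ∨ ε i = -1) ∧ Even {i | ε i = -1}.ncard ∧
      ∀ i ≠ j, ε i = σ i := by
  by_cases heven : Even {i | σ i = -1}.ncard
  · exact ⟨σ, hσ, heven, fun _ _ => rfl⟩
  set ε := Function.update σ j (-σ j)
  have hε (i : ι) : ε i = 1 ∨ ε i = -1 := by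
    by_cases hi : i = j
    · rcases hσ j with h | h <;> simp [ε, hi, h]
    · simpa [ε, hi] using hσ i
  refine ⟨ε, hε, ?_, fun i hi => Function.update_of_ne hi _ _⟩
  have hflip : ∏ i, ε i = -∏ i, σ i := by
    rw [Finset.prod_update_of_mem (Finset.mem_univ j),
      ← Finset.mul_prod_erase _ _ (Finset.mem_univ j), Finset.sdiff_singleton_eq_erase, neg_mul]
  rw [← neg_one_pow_eq_one_iff_even (R := ℝ) (by norm_num), ← prod_eq_neg_one_pow_ncard hε,
    hflip, prod_eq_neg_one_pow_ncard hσ, (Nat.not_even_iff_odd.1 heven).neg_one_pow, neg_neg]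

variable {δ : ℝ}

lemma sq_abs_sub_le_sq_sub_mul {s : ℝ} (t : ℝ) (hδ : 0 ≤ δ) (hs : s = 1 ∨ s = -1) :
    (|t| - δ) ^ 2 ≤ (t - δ * s) ^ 2 := by
  rcases hs with rfl | rfl <;>
    nlinarith [sq_abs t, mul_le_mul_of_nonneg_left (le_abs_self t) hδ,
      mul_le_mul_of_nonneg_left (neg_le_abs t) hδ]

lemma sq_sub_mul_le_sq_abs_sub_add {s t : ℝ} (hδ : 0 ≤ δ) (hs : s = 1 ∨ s = -1)
    (ht : |t| ≤ 1) : (t - δ * s) ^ 2 ≤ (|t| - δ) ^ 2 + 4 * δ := by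
  rcases hs with rfl | rfl <;>
    nlinarith [sq_abs t, abs_nonneg t, le_abs_self t, neg_le_abs t]

lemma dist_toLp_sq {d : ℕ} (x : Fin d → ℝ) (z : EuclideanSpace ℝ (Fin d)) :
    dist (WithLp.toLp 2 x) z ^ 2 = ∑ i, (x i - z i) ^ 2 := by
  rw [EuclideanSpace.dist_eq, Real.sq_sqrt (by positivity)]
  simp [Real.dist_eq, sq_abs]

lemma sum_sq_abs_sub_le_dist_sq {d : ℕ} (hδ : 0 ≤ δ) (y : Fin d → ℝ)
    {z : EuclideanSpace ℝ (Fin d)} (hz : z ∈ design d δ) :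
    ∑ i, (|y i| - δ) ^ 2 ≤ dist (WithLp.toLp 2 y) z ^ 2 := by
  obtain ⟨ε, hε, -, hz⟩ := hz
  rw [dist_toLp_sq, hz]
  exact Finset.sum_le_sum fun i _ => sq_abs_sub_le_sq_sub_mul (y i) hδ (hε i)

lemma exists_mem_design_dist_sq_le {d : ℕ} (hd : 0 < d) (hδ : 0 ≤ δ)
    {y : Fin d → ℝ} (hy : ∀ i, |y i| ≤ 1) :
    ∃ z ∈ design d δ, dist (WithLp.toLp 2 y) z ^ 2 ≤ ∑ i, (|y i| - δ) ^ 2 + 4 * δ := by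
  classical
  let σ : Fin d → ℝ := fun i => if y i < 0 then -1 else 1
  have hσ (i : Fin d) : σ i = 1 ∨ σ i = -1 := by by_cases h : y i < 0 <;> simp [σ, h]
  have hσy (i : Fin d) : (y i - δ * σ i) ^ 2 = (|y i| - δ) ^ 2 := by
    by_cases h : y i < 0
    · rw [abs_of_neg h]
      simp only [σ, if_pos h]
      ring
    · rw [abs_of_nonneg (not_lt.1 h)]
      simp only [σ, if_neg h]
      ring
  let j : Fin d := ⟨0, hd⟩
  obtain ⟨ε, hε, heven, hεσ⟩ := exists_even_signs_eq_of_ne hσ j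
  refine ⟨WithLp.toLp 2 fun i => δ * ε i, ⟨ε, hε, heven, rfl⟩, ?_⟩
  rw [dist_toLp_sq]
  calc ∑ i, (y i - δ * ε i) ^ 2 ≤ ∑ i, ((|y i| - δ) ^ 2 + if i = j then 4 * δ else 0) := by
        refine Finset.sum_le_sum fun i _ => ?_
        split_ifs with h
        · exact sq_sub_mul_le_sq_abs_sub_add hδ (hε i) (hy i)
        · rw [hεσ i h, hσy, add_zero]
    _ = _ := by simp [Finset.sum_add_distrib]

/-- Weak law of large numbers, from Chebyshev's inequality. -/
theorem tendsto_pi_measure_abs_sum_sub_ge {Ω : Type*} [MeasurableSpace Ω] {μ : Measure Ω}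
    [IsProbabilityMeasure μ] {f : Ω → ℝ} (hf : MemLp f 2 μ) {c : ℝ} (hc : 0 < c) :
    Tendsto (fun d : ℕ => Measure.pi (fun _ : Fin d => μ)
      {ω | c * d ≤ |∑ i, f (ω i) - d * ∫ x, f x ∂μ|}) atTop (𝓝 0) := by
  have hchebyshev (d : ℕ) (hd : 0 < d) : Measure.pi (fun _ : Fin d => μ)
      {ω | c * d ≤ |∑ i, f (ω i) - d * ∫ x, f x ∂μ|} ≤
        ENNReal.ofReal (Var[f; μ] / c ^ 2 / d) := by
    have hf_i (i : Fin d) : MemLp (fun ω : Fin d → Ω => f (ω i)) 2 (Measure.pi fun _ => μ) :=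
      hf.comp_measurePreserving (measurePreserving_eval _ i)
    have hmean : ∫ ω, (∑ i, fun ω : Fin d → Ω => f (ω i)) ω ∂(Measure.pi fun _ => μ) =
        d * ∫ x, f x ∂μ := by
      have h_i (i : Fin d) : ∫ ω, f (ω i) ∂(Measure.pi fun _ => μ) = ∫ x, f x ∂μ :=
        integral_comp_eval (μ := fun _ => μ) hf.aestronglyMeasurable
      simp [integral_finsetSum _ fun i _ => (hf_i i).integrable one_le_two, h_i]
    have hvar : Var[∑ i, fun ω : Fin d → Ω => f (ω i); Measure.pi fun _ => μ] =
        d * Var[f; μ] := by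
      simp [variance_sum_pi fun _ => hf]
    have := meas_ge_le_variance_div_sq (memLp_finsetSum' Finset.univ fun i _ => hf_i i)
      (mul_pos hc (Nat.cast_pos.2 hd))
    rw [hmean, hvar] at this
    convert this using 2
    · simp
    · field_simp
  have hbound : Tendsto (fun d : ℕ => ENNReal.ofReal (Var[f; μ] / c ^ 2 / d)) atTop (𝓝 0) := by
    simpa using ENNReal.tendsto_ofReal (tendsto_const_div_atTop_nhds_zero_nat _)
  exact tendsto_of_tendsto_of_tendsto_of_le_of_le' tendsto_const_nhds hbound
    (Eventually.of_forall fun _ => zero_le)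
    ((eventually_gt_atTop 0).mono hchebyshev)

instance : IsProbabilityMeasure (volume[|Icc (-1 : ℝ) 1]) :=
  cond_isProbabilityMeasure_of_finite (by simp) (by simp)

abbrev uniformCube (d : ℕ) : Measure (Fin d → ℝ) := Measure.pi fun _ => volume[|Icc (-1 : ℝ) 1]

lemma uniformCube_eq (d : ℕ) :
    uniformCube d = ((2 : ENNReal) ^ d)⁻¹ • volume.restrict (univ.pi fun _ => Icc (-1 : ℝ) 1) := by
  refine Measure.pi_eq fun s hs => ?_
  simp_rw [Measure.smul_apply, Measure.restrict_apply (MeasurableSet.univ_pi hs),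
    ← pi_inter_distrib, volume_pi_pi, cond_apply measurableSet_Icc, Real.volume_Icc,
    smul_eq_mul, Finset.prod_mul_distrib, Finset.prod_const, Finset.card_univ, Fintype.card_fin,
    ENNReal.inv_pow, inter_comm]
  norm_num

lemma uniformCube_compl_pi_Icc (d : ℕ) :
    uniformCube d (univ.pi fun _ => Icc (-1 : ℝ) 1)ᶜ = 0 := by
  rw [prob_compl_eq_zero_iff (MeasurableSet.univ_pi fun _ => measurableSet_Icc), Measure.pi_pi]
  simp

lemma cover_eq_uniformCube_real (d : ℕ) (Z : Set (EuclideanSpace ℝ (Fin d))) (r : ℝ) :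
    cover d Z r = (uniformCube d).real (WithLp.toLp 2 ⁻¹' ⋃ z ∈ Z, Metric.closedBall z r) := by
  have e := (EuclideanSpace.volume_preserving_symm_measurableEquiv_toLp (Fin d)).symm
  rw [measureReal_def, uniformCube_eq, Measure.smul_apply, smul_eq_mul,
    Measure.restrict_apply' (MeasurableSet.univ_pi fun _ => measurableSet_Icc), cover,
    ← e.measure_preimage_equiv, ENNReal.toReal_mul, ENNReal.toReal_inv, div_eq_inv_mul,
    preimage_inter, inter_comm, ENNReal.toReal_pow, ENNReal.toReal_ofNat]
  congr 4
  ext x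
  simp [cube, Pi.le_def, forall_and]

lemma cover_mono {d : ℕ} (Z : Set (EuclideanSpace ℝ (Fin d))) {r r' : ℝ} (h : r ≤ r') :
    cover d Z r ≤ cover d Z r' := by
  simp only [cover_eq_uniformCube_real]
  exact measureReal_mono
    (preimage_mono (iUnion₂_mono fun _ _ => Metric.closedBall_subset_closedBall h))

/-- The mean squared distance from a uniform point of `[-1, 1]` to `{-δ, δ}`. -/
def meanSqDist (δ : ℝ) : ℝ := ∫ t, (|t| - δ) ^ 2 ∂volume[|Icc (-1 : ℝ) 1]

lemma intervalIntegral_sq_abs_sub (δ : ℝ) :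
    ∫ t in (-1 : ℝ)..1, (|t| - δ) ^ 2 = 2 * ∫ t in (0 : ℝ)..1, (t - δ) ^ 2 := by
  have hcont : Continuous fun t : ℝ => (|t| - δ) ^ 2 := by fun_prop
  have heven : ∫ t in (-1 : ℝ)..0, (|t| - δ) ^ 2 = ∫ t in (0 : ℝ)..1, (|t| - δ) ^ 2 := by
    simpa using (intervalIntegral.integral_comp_neg (a := 0) (b := 1) fun t => (|t| - δ) ^ 2).symm
  rw [← intervalIntegral.integral_add_adjacent_intervals (b := 0) (hcont.intervalIntegrable _ _)
    (hcont.intervalIntegrable _ _), heven, ← two_mul]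
  congr 1
  refine intervalIntegral.integral_congr fun t ht => ?_
  rw [uIcc_of_le zero_le_one] at ht
  simp [abs_of_nonneg ht.1]

lemma meanSqDist_eq (δ : ℝ) : meanSqDist δ = (1 / 3 + (2 * δ - 1) ^ 2) / 4 := by
  rw [meanSqDist, ProbabilityTheory.cond, integral_smul_measure, integral_Icc_eq_integral_Ioc,
    ← intervalIntegral.integral_of_le (by norm_num), intervalIntegral_sq_abs_sub,
    intervalIntegral.integral_comp_sub_right (fun t => t ^ 2), integral_pow, Real.volume_Icc]
  norm_num
  ring

lemma memLp_sq_abs_sub_cond_Icc (δ : ℝ) :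
    MemLp (fun t : ℝ => (|t| - δ) ^ 2) 2 volume[|Icc (-1 : ℝ) 1] := by
  refine MemLp.of_bound (by fun_prop) ((1 + |δ|) ^ 2) ?_
  filter_upwards [ae_cond_mem measurableSet_Icc] with t ht
  have : |t| ≤ 1 := abs_le.2 ht
  rw [Real.norm_eq_abs, abs_pow]
  exact pow_le_pow_left₀ (abs_nonneg _) ((abs_sub _ _).trans (by rw [abs_abs]; linarith)) 2

lemma tendsto_uniformCube_real_abs_sum_sub_ge (δ : ℝ) {c : ℝ} (hc : 0 < c) :
    Tendsto (fun d : ℕ => (uniformCube d).real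
      {y | c * d ≤ |∑ i, (|y i| - δ) ^ 2 - d * meanSqDist δ|}) atTop (𝓝 0) :=
  (ENNReal.tendsto_toReal ENNReal.zero_ne_top).comp
    (tendsto_pi_measure_abs_sum_sub_ge (memLp_sq_abs_sub_cond_Icc δ) hc)

lemma tendsto_cover_sqrt_mul_of_lt (hδ : 0 ≤ δ) {a : ℝ} (ha0 : 0 ≤ a) (ha : a < meanSqDist δ) :
    Tendsto (fun d : ℕ => cover d (design d δ) (√(a * d))) atTop (𝓝 0) := by
  refine squeeze_zero (fun d => ?_) (fun d => ?_)
    (tendsto_uniformCube_real_abs_sum_sub_ge δ (sub_pos.2 ha))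
  · rw [cover_eq_uniformCube_real]
    exact measureReal_nonneg
  rw [cover_eq_uniformCube_real]
  refine measureReal_mono fun y hy => ?_
  simp only [mem_preimage, mem_iUnion, Metric.mem_closedBall, exists_prop] at hy
  obtain ⟨z, hz, hyz⟩ := hy
  have hsum := sum_sq_abs_sub_le_dist_sq hδ y hz
  have hdist := (Real.le_sqrt dist_nonneg (by positivity)).1 hyz
  rw [mem_ofPred_eq, abs_sub_comm]
  exact le_trans (by linarith) (le_abs_self _)

lemma tendsto_cover_sqrt_mul_of_gt (hδ : 0 ≤ δ) {b : ℝ} (hb : meanSqDist δ < b) :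
    Tendsto (fun d : ℕ => cover d (design d δ) (√(b * d))) atTop (𝓝 1) := by
  set c := (b - meanSqDist δ) / 2 with hc_def
  have hc : 0 < c := half_pos (sub_pos.2 hb)
  refine tendsto_of_tendsto_of_tendsto_of_le_of_le'
    (by simpa using (tendsto_uniformCube_real_abs_sum_sub_ge δ hc).const_sub 1)
    tendsto_const_nhds ?_ (Eventually.of_forall fun d => ?_)
  · filter_upwards [eventually_gt_atTop 0, eventually_ge_atTop ⌈4 * δ / c⌉₊] with d hd0 hd
    have h4δ : 4 * δ ≤ c * d :=
      (div_le_iff₀' hc).1 ((Nat.le_ceil _).trans (by exact_mod_cast hd))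
    set B := {y : Fin d → ℝ | c * d ≤ |∑ i, (|y i| - δ) ^ 2 - d * meanSqDist δ|}
    have hB : MeasurableSet B := measurableSet_le (by fun_prop) (by fun_prop)
    rw [cover_eq_uniformCube_real]
    calc 1 - (uniformCube d).real B = (uniformCube d).real Bᶜ := (probReal_compl_eq_one_sub hB).symm
      _ = (uniformCube d).real (Bᶜ ∩ univ.pi fun _ => Icc (-1) 1) := by
        rw [measureReal_def, measureReal_def, measure_inter_conull (uniformCube_compl_pi_Icc d)]
      _ ≤ _ := by
        refine measureReal_mono fun y ⟨hyB, hy⟩ => ?_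
        simp only [B, mem_compl_iff, mem_ofPred_eq, not_le, abs_lt] at hyB
        obtain ⟨z, hz, hyz⟩ :=
          exists_mem_design_dist_sq_le hd0 hδ fun i => abs_le.2 (hy i (mem_univ i))
        simp only [mem_preimage, mem_iUnion, Metric.mem_closedBall, exists_prop]
        exact ⟨z, hz, Real.le_sqrt_of_sq_le (by rw [hc_def] at hyB h4δ; linarith)⟩
  · rw [cover_eq_uniformCube_real]
    exact measureReal_le_one

variable {γ : ℝ}

lemma rcov_nonneg (d : ℕ) : 0 ≤ rcov d δ γ :=
  Real.sInf_nonneg fun _ hr => hr.1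

lemma eventually_sqrt_mul_mem_of_gt (hγ : 0 < γ) (hδ : 0 ≤ δ) {b : ℝ} (hb : meanSqDist δ < b) :
    ∀ᶠ d : ℕ in atTop, √(b * d) ∈ {r : ℝ | 0 ≤ r ∧ 1 - γ ≤ cover d (design d δ) r} :=
  ((tendsto_cover_sqrt_mul_of_gt hδ hb).eventually (lt_mem_nhds (by linarith))).mono
    fun _ h => ⟨Real.sqrt_nonneg _, h.le⟩

lemma eventually_rcov_sq_le (hγ : 0 < γ) (hδ : 0 ≤ δ) {b : ℝ} (hb : meanSqDist δ < b) :
    ∀ᶠ d : ℕ in atTop, rcov d δ γ ^ 2 ≤ b * d := by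
  have hb0 : 0 ≤ b := (integral_nonneg fun _ => sq_nonneg _).trans hb.le
  filter_upwards [eventually_sqrt_mul_mem_of_gt hγ hδ hb] with d hd
  exact (Real.le_sqrt (rcov_nonneg d) (by positivity)).1 (csInf_le ⟨0, fun _ hr => hr.1⟩ hd)

lemma eventually_le_rcov_sq (hγ0 : 0 < γ) (hγ1 : γ < 1) (hδ : 0 ≤ δ) {a : ℝ} (ha0 : 0 ≤ a)
    (ha : a < meanSqDist δ) :
    ∀ᶠ d : ℕ in atTop, a * d ≤ rcov d δ γ ^ 2 := by
  filter_upwards [(tendsto_cover_sqrt_mul_of_lt hδ ha0 ha).eventually (gt_mem_nhds (sub_pos.2 hγ1)),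
    eventually_sqrt_mul_mem_of_gt hγ0 hδ (lt_add_one _)] with d hsmall hmem
  refine (Real.sqrt_le_iff.1 (le_csInf ⟨_, hmem⟩ fun r hr => ?_)).2
  by_contra! hr'
  exact (hr.2.trans (cover_mono _ hr'.le)).not_gt hsmall

lemma tendsto_rcov_sq_div (hγ0 : 0 < γ) (hγ1 : γ < 1) (hδ : 0 ≤ δ) :
    Tendsto (fun d : ℕ => rcov d δ γ ^ 2 / d) atTop (𝓝 (meanSqDist δ)) := by
  have hm : 0 < meanSqDist δ := by
    rw [meanSqDist_eq]
    positivity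
  refine tendsto_order.2 ⟨fun a ha => ?_, fun b hb => ?_⟩
  · obtain ⟨a', ha', ha'm⟩ := exists_between (max_lt ha hm)
    filter_upwards [eventually_le_rcov_sq hγ0 hγ1 hδ ((le_max_right _ _).trans ha'.le) ha'm,
      eventually_gt_atTop 0] with d hd hd0
    have hd0' : (0 : ℝ) < d := by exact_mod_cast hd0
    rw [lt_div_iff₀ hd0']
    calc a * d < a' * d := mul_lt_mul_of_pos_right ((le_max_left _ _).trans_lt ha') hd0'
      _ ≤ _ := hd
  · obtain ⟨b', hb', hb'b⟩ := exists_between hb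
    filter_upwards [eventually_rcov_sq_le hγ0 hδ hb', eventually_gt_atTop 0] with d hd hd0
    have hd0' : (0 : ℝ) < d := by exact_mod_cast hd0
    rw [div_lt_iff₀ hd0']
    exact hd.trans_lt (mul_lt_mul_of_pos_right hb'b hd0')

lemma tendsto_rcov_div_sqrt (hγ0 : 0 < γ) (hγ1 : γ < 1) (hδ : 0 ≤ δ) :
    Tendsto (fun d : ℕ => rcov d δ γ / √d) atTop (𝓝 (√(1 / 3 + (2 * δ - 1) ^ 2) / 2)) := by
  have h := (Real.continuous_sqrt.tendsto _).comp (tendsto_rcov_sq_div hγ0 hγ1 hδ)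
  rw [meanSqDist_eq, Real.sqrt_div' _ (by norm_num : (0 : ℝ) ≤ 4),
    show √(4 : ℝ) = 2 by rw [show (4 : ℝ) = 2 ^ 2 by norm_num, Real.sqrt_sq two_pos.le]] at h
  refine h.congr fun d => ?_
  simp [Real.sqrt_div' _ (Nat.cast_nonneg d), Real.sqrt_sq (rcov_nonneg d)]

end CoveringRadius

lemma tendsto_two_rpow_sub_one_div :
    Tendsto (fun d : ℕ => (2 : ℝ) ^ (((d : ℝ) - 1) / d)) atTop (𝓝 2) := by
  have h : Tendsto (fun d : ℕ => ((d : ℝ) - 1) / d) atTop (𝓝 1) := by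
    have := tendsto_const_nhds (x := (1 : ℝ)).sub tendsto_inv_atTop_nhds_zero_nat
    rw [sub_zero] at this
    refine this.congr' ((eventually_ne_atTop 0).mono fun d hd => ?_)
    field_simp
  simpa [Function.comp_def] using (Real.continuousAt_const_rpow two_ne_zero).tendsto.comp h

lemma one_div_two_mul_sqrt_three_eq : 1 / (2 * √3) = √(1 / 3) / 2 := by
  rw [one_div (3 : ℝ), Real.sqrt_inv, one_div, mul_inv, mul_comm, div_eq_mul_inv]

lemma one_div_two_mul_sqrt_three_le (δ : ℝ) :
    1 / (2 * √3) ≤ √(1 / 3 + (2 * δ - 1) ^ 2) / 2 := by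
  rw [one_div_two_mul_sqrt_three_eq]
  gcongr
  exact le_add_of_nonneg_right (sq_nonneg _)

lemma sqrt_div_two_eq_one_div_two_mul_sqrt_three_iff (δ : ℝ) :
    √(1 / 3 + (2 * δ - 1) ^ 2) / 2 = 1 / (2 * √3) ↔ δ = 1 / 2 := by
  rw [one_div_two_mul_sqrt_three_eq, div_left_inj' two_ne_zero,
    Real.sqrt_inj (by positivity) (by norm_num)]
  constructor
  · intro h
    nlinarith [sq_nonneg (2 * δ - 1)]
  · rintro rfl
    norm_num

theorem stmt16_general (γ δ : ℝ) (hγ0 : 0 < γ) (hγ1 : γ < 1) (hδ0 : 0 < δ) :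
    Tendsto
        (fun d : ℕ =>
          (2 : ℝ) ^ (((d : ℝ) - 1) / d) * rcov d δ γ / (2 * Real.sqrt d)) atTop
        (nhds (Real.sqrt (1 / 3 + (2 * δ - 1) ^ 2) / 2)) ∧
      1 / (2 * Real.sqrt 3) ≤ Real.sqrt (1 / 3 + (2 * δ - 1) ^ 2) / 2 ∧
      (Real.sqrt (1 / 3 + (2 * δ - 1) ^ 2) / 2 = 1 / (2 * Real.sqrt 3) ↔ δ = 1 / 2) := by
  refine ⟨?_, one_div_two_mul_sqrt_three_le δ, sqrt_div_two_eq_one_div_two_mul_sqrt_three_iff δ⟩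
  have h := (tendsto_two_rpow_sub_one_div.div_const 2).mul (tendsto_rcov_div_sqrt hγ0 hγ1 hδ0.le)
  rw [div_self two_ne_zero, one_mul] at h
  exact h.congr fun d => div_mul_div_comm _ _ _ _

theorem stmt16 (γ δ : ℝ) (hγ0 : 0 < γ) (hγ1 : γ < 1) (hδ0 : 0 < δ) (hδ1 : δ ≤ 1) :
    Tendsto
        (fun d : ℕ =>
          (2 : ℝ) ^ (((d : ℝ) - 1) / d) * rcov d δ γ / (2 * Real.sqrt d)) atTop
        (nhds (Real.sqrt (1 / 3 + (2 * δ - 1) ^ 2) / 2)) ∧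
      1 / (2 * Real.sqrt 3) ≤ Real.sqrt (1 / 3 + (2 * δ - 1) ^ 2) / 2 ∧
      (Real.sqrt (1 / 3 + (2 * δ - 1) ^ 2) / 2 = 1 / (2 * Real.sqrt 3) ↔ δ = 1 / 2) :=
  stmt16_general γ δ hγ0 hγ1 hδ0

end
end
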